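/- arXiv:math/0505647 — 10 statements merged into one kernel-verified Lean document; each statement's English description precedes it below -/
import Mathlib

section
/- T(1,1,1) = 2\zeta(3), i.e., \sum_{n=1}^\infty \sum_{m=1}^\infty 1/(n m (n+m)) = 2 \sum_{r=1}^\infty 1/r^3. -/
open Filter Finset Topology

/-!
Euler's argument. Summing `1 / (n m (n + m))` over `m` telescopes, since
`1 / (n m (n + m)) = (1 / m - 1 / (n + m)) / n²`, and gives `H_n / n² = H_{n-1} / n² + 1 / n³`;
hence `T(1,1,1) = S + ζ(3)` with `S = ∑ H_{n-1} / n²`. Summing instead along the diagonals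
`n + m = s`, where `1 / (n m s) = (1 / n + 1 / m) / s²`, gives `T(1,1,1) = 2 S`.
So `S = ζ(3)` and `T(1,1,1) = 2 ζ(3)`.
-/

theorem HasSum.sum_antidiagonal {A α : Type*} [AddCommMonoid A] [HasAntidiagonal A]
    [AddCommMonoid α] [TopologicalSpace α] [ContinuousAdd α] [RegularSpace α]
    {f : A × A → α} {a : α} (hf : HasSum f a) :
    HasSum (fun n ↦ ∑ p ∈ antidiagonal n, f p) a :=
  (HasAntidiagonal.sigmaAntidiagonalEquivProd.hasSum_iff.mpr hf).sigma fun n ↦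
    (sum_coe_sort (antidiagonal n) f) ▸ hasSum_fintype _

theorem hasSum_sub_nat_add_of_antitone {f : ℕ → ℝ} (hf : Antitone f)
    (hf0 : Tendsto f atTop (𝓝 0)) (m : ℕ) :
    HasSum (fun n ↦ f n - f (n + m)) (∑ i ∈ range m, f i) := by
  rw [hasSum_iff_tendsto_nat_of_nonneg fun n ↦ sub_nonneg.mpr (hf (Nat.le_add_right n m))]
  have partial_sum (N : ℕ) : ∑ n ∈ range N, (f n - f (n + m))
      = ∑ i ∈ range m, f i - ∑ i ∈ range m, f (N + i) := by
    have h₁ := sum_range_add f N m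
    have h₂ := sum_range_add f m N
    rw [Nat.add_comm m N] at h₂
    simp only [sum_sub_distrib, Nat.add_comm _ m]
    linarith
  have tail : Tendsto (fun N ↦ ∑ i ∈ range m, f (N + i)) atTop (𝓝 0) := by
    simpa using tendsto_finsetSum (range m) fun i _ ↦ hf0.comp (tendsto_add_atTop_nat i)
  simpa [partial_sum] using tendsto_const_nhds.sub tail

theorem one_div_mul_mul_add_eq_sub {K : Type*} [Field K] {x y : K} (hx : x ≠ 0) (hy : y ≠ 0)
    (hxy : x + y ≠ 0) : 1 / (x * y * (x + y)) = (1 / y - 1 / (x + y)) / x ^ 2 := by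
  field_simp
  ring

theorem one_div_mul_mul_add_eq_add {K : Type*} [Field K] {x y : K} (hx : x ≠ 0) (hy : y ≠ 0)
    (hxy : x + y ≠ 0) : 1 / (x * y * (x + y)) = (1 / x + 1 / y) / (x + y) ^ 2 := by
  field_simp
  ring

theorem one_div_mul_mul_add_le {x y : ℝ} (hx : 0 < x) (hy : 0 < y) :
    1 / (x * y * (x + y)) ≤ 1 / (x * √x) * (1 / (y * √y)) := by
  have hsq : √x * √y ≤ x + y := by
    nlinarith [sq_nonneg (√x - √y), Real.sq_sqrt hx.le, Real.sq_sqrt hy.le,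
      Real.sqrt_nonneg x, Real.sqrt_nonneg y]
  rw [div_mul_div_comm, one_mul]
  refine one_div_le_one_div_of_le (by positivity) ?_
  calc x * √x * (y * √y) = x * y * (√x * √y) := by ring
    _ ≤ x * y * (x + y) := by gcongr

theorem harmonic_eq_sum_one_div (n : ℕ) :
    (harmonic n : ℝ) = ∑ i ∈ range n, 1 / ((i : ℝ) + 1) := by
  simp [harmonic]

-- The term of `T(1,1,1)` at `(n + 1, m + 1)`: the series is reindexed over `ℕ × ℕ`.
noncomputable def tornheimTerm (p : ℕ × ℕ) : ℝ :=
  1 / (((p.1 : ℝ) + 1) * ((p.2 : ℝ) + 1) * (((p.1 : ℝ) + 1) + ((p.2 : ℝ) + 1)))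

theorem summable_tornheimTerm : Summable tornheimTerm := by
  have hp : Summable fun n : ℕ ↦ 1 / (((n : ℝ) + 1) * √((n : ℝ) + 1)) := by
    refine ((Real.summable_one_div_nat_add_rpow 1 (3 / 2)).mpr (by norm_num)).congr fun n ↦ ?_
    have hn : (0 : ℝ) < n + 1 := by positivity
    rw [abs_of_pos hn, show (3 / 2 : ℝ) = 1 + 1 / 2 by norm_num, Real.rpow_add hn,
      Real.rpow_one, Real.sqrt_eq_rpow]
  refine (hp.mul_of_nonneg hp (fun _ ↦ by positivity) fun _ ↦ by positivity).of_nonneg_of_le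
    (fun _ ↦ by unfold tornheimTerm; positivity) fun p ↦ ?_
  exact one_div_mul_mul_add_le (by positivity) (by positivity)

theorem hasSum_tornheimTerm_fiber (n : ℕ) :
    HasSum (fun m ↦ tornheimTerm (n, m))
      ((harmonic n : ℝ) / ((n : ℝ) + 1) ^ 2 + 1 / ((n : ℝ) + 1) ^ 3) := by
  have htel := hasSum_sub_nat_add_of_antitone (f := fun k : ℕ ↦ 1 / ((k : ℝ) + 1))
    (fun a b hab ↦ by dsimp only; gcongr) tendsto_one_div_add_atTop_nhds_zero_nat (n + 1)
  have hterm (m : ℕ) : tornheimTerm (n, m)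
      = (1 / ((m : ℝ) + 1) - 1 / (((m + (n + 1) : ℕ) : ℝ) + 1)) / ((n : ℝ) + 1) ^ 2 := by
    rw [tornheimTerm, one_div_mul_mul_add_eq_sub (by positivity) (by positivity) (by positivity)]
    push_cast
    ring_nf
  have hvalue : (harmonic (n + 1) : ℝ) / ((n : ℝ) + 1) ^ 2
      = (harmonic n : ℝ) / ((n : ℝ) + 1) ^ 2 + 1 / ((n : ℝ) + 1) ^ 3 := by
    rw [harmonic_succ]
    push_cast
    field_simp
  rw [funext hterm, ← hvalue, harmonic_eq_sum_one_div]
  exact htel.div_const _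

theorem sum_antidiagonal_tornheimTerm (s : ℕ) :
    ∑ p ∈ antidiagonal s, tornheimTerm p
      = 2 * ((harmonic (s + 1) : ℝ) / (((s + 1 : ℕ) : ℝ) + 1) ^ 2) := by
  have hterm : ∀ p ∈ antidiagonal s, tornheimTerm p
      = (1 / ((p.1 : ℝ) + 1) + 1 / ((p.2 : ℝ) + 1)) / (((s + 1 : ℕ) : ℝ) + 1) ^ 2 := by
    intro p hp
    rw [tornheimTerm, one_div_mul_mul_add_eq_add (by positivity) (by positivity) (by positivity),
      ← mem_antidiagonal.mp hp]
    push_cast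
    ring_nf
  have hswap : ∑ p ∈ antidiagonal s, 1 / ((p.2 : ℝ) + 1)
      = ∑ p ∈ antidiagonal s, 1 / ((p.1 : ℝ) + 1) :=
    (Nat.sum_antidiagonal_swap (f := fun p ↦ 1 / ((p.2 : ℝ) + 1))).symm
  rw [sum_congr rfl hterm, ← sum_div, sum_add_distrib, hswap,
    Nat.sum_antidiagonal_eq_sum_range_succ (fun i _ ↦ 1 / ((i : ℝ) + 1)),
    harmonic_eq_sum_one_div]
  ring

theorem hasSum_harmonic_div_sq_of_hasSum_tornheimTerm {T : ℝ} (hT : HasSum tornheimTerm T) :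
    HasSum (fun n : ℕ ↦ (harmonic n : ℝ) / ((n : ℝ) + 1) ^ 2) (T / 2) := by
  have diagonals : HasSum (fun s ↦ ∑ p ∈ antidiagonal s, tornheimTerm p) T := hT.sum_antidiagonal
  simp only [sum_antidiagonal_tornheimTerm] at diagonals
  have doubled := (hasSum_nat_add_iff
    (f := fun n : ℕ ↦ 2 * ((harmonic n : ℝ) / ((n : ℝ) + 1) ^ 2)) 1).mp diagonals
  simpa using doubled.div_const 2

theorem tsum_pnat_tornheim_eq_tsum_tornheimTerm :
    (∑' n : ℕ+, ∑' m : ℕ+,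
      1 / (((n : ℕ) : ℝ) * ((m : ℕ) : ℝ) * (((n : ℕ) + (m : ℕ) : ℕ) : ℝ)))
      = ∑' p, tornheimTerm p := by
  rw [summable_tornheimTerm.tsum_prod, tsum_pnat_eq_tsum_succ
    (f := fun n ↦ ∑' m : ℕ+, 1 / ((n : ℝ) * ((m : ℕ) : ℝ) * ((n + (m : ℕ) : ℕ) : ℝ)))]
  refine tsum_congr fun n ↦ ?_
  rw [tsum_pnat_eq_tsum_succ (f := fun m ↦ 1 / (((n + 1 : ℕ) : ℝ) * m * ((n + 1 + m : ℕ) : ℝ)))]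
  refine tsum_congr fun m ↦ ?_
  simp only [tornheimTerm]
  push_cast
  ring_nf

theorem tornheim_one_one_one :
    (∑' n : ℕ+, ∑' m : ℕ+,
      1 / (((n : ℕ) : ℝ) * ((m : ℕ) : ℝ) * (((n : ℕ) + (m : ℕ) : ℕ) : ℝ)))
      = 2 * ∑' r : ℕ+, 1 / ((r : ℕ) : ℝ) ^ 3 := by
  obtain ⟨T, hT⟩ := summable_tornheimTerm
  have rows := hT.prod_fiberwise hasSum_tornheimTerm_fiber
  have zeta_three : HasSum (fun n : ℕ ↦ 1 / ((n : ℝ) + 1) ^ 3) (T / 2) := by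
    simpa [sub_half] using rows.sub (hasSum_harmonic_div_sq_of_hasSum_tornheimTerm hT)
  rw [tsum_pnat_tornheim_eq_tsum_tornheimTerm, hT.tsum_eq,
    tsum_pnat_eq_tsum_succ (f := fun r ↦ 1 / (r : ℝ) ^ 3)]
  push_cast
  rw [zeta_three.tsum_eq]
  ring
end

section
/- For an integer a \ge 4, one has 2 T(a-2,1,1) - T(1,1,a-2) = 2\zeta(a). -/
/-- The Tornheim double series with natural number exponents. -/
noncomputable def tornheimN (a b c : ℕ) : ℝ :=
  ∑' n : ℕ+, ∑' m : ℕ+,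
    1 / (((n : ℕ) : ℝ) ^ a * ((m : ℕ) : ℝ) ^ b * (((n : ℕ) + (m : ℕ) : ℕ) : ℝ) ^ c)

/-!
Write `b = a - 2` and `H n` for the harmonic numbers. Since `1/(m(n+m)) = (1/n)(1/m - 1/(n+m))`,
the inner sum of `T(b,1,1)` telescopes to `H n / n`, so `T(b,1,1) = ∑ H n / n^(b+1)`.
Since `1/(nm) = (1/(n+m))(1/n + 1/m)`, symmetry gives
`T(1,1,b) = 2 ∑_{n,m} 1/(n (n+m)^(b+1))`, and grouping the pairs by `N = n + m` turns this into
`2 ∑ H (N-1) / N^(b+1)`. The difference is `2 ∑ (H N - H (N-1)) / N^(b+1) = 2 ∑ 1/N^(b+2) = 2 ζ(a)`.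
-/

open Filter Topology Finset

/-- Antitonicity makes the terms nonnegative, so convergence of the partial sums suffices. -/
theorem hasSum_sub_shift_of_antitone {f : ℕ → ℝ} (hf : Antitone f)
    (hf₀ : Tendsto f atTop (𝓝 0)) (n : ℕ) :
    HasSum (fun k ↦ f k - f (k + n)) (∑ i ∈ range n, f i) := by
  rw [hasSum_iff_tendsto_nat_of_nonneg fun k ↦ sub_nonneg.2 (hf (k.le_add_right n))]
  have partial_sum (M : ℕ) : ∑ k ∈ range M, (f k - f (k + n))
      = ∑ i ∈ range n, f i - ∑ i ∈ range n, f (M + i) := by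
    have h₁ := sum_range_add f M n
    have h₂ := sum_range_add f n M
    simp only [add_comm n] at h₂
    rw [sum_sub_distrib]
    linarith
  simp only [partial_sum]
  have hvanish : Tendsto (fun M ↦ ∑ i ∈ range n, f (M + i)) atTop (𝓝 0) := by
    simpa using tendsto_finsetSum (range n) fun i _ ↦ hf₀.comp (tendsto_add_atTop_nat i)
  simpa using tendsto_const_nhds.sub hvanish

theorem hasSum_one_div_sub_one_div_add (n : ℕ) :
    HasSum (fun m : ℕ+ ↦ 1 / (m : ℝ) - 1 / ((m + n : ℕ) : ℝ)) (harmonic n) := by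
  have hanti : Antitone fun k : ℕ ↦ 1 / ((k : ℝ) + 1) := fun i j hij ↦
    one_div_le_one_div_of_le (by positivity) (by simpa using hij)
  have h := hasSum_sub_shift_of_antitone hanti tendsto_one_div_add_atTop_nhds_zero_nat n
  have hH : ∑ i ∈ range n, 1 / ((i : ℝ) + 1) = harmonic n := by simp [harmonic]
  rw [hH] at h
  refine (hasSum_pnat_iff_hasSum_succ (f := fun k : ℕ ↦ 1 / (k : ℝ) - 1 / ((k + n : ℕ) : ℝ))).2 ?_
  convert h using 2 with k
  push_cast
  ring

theorem hasSum_tornheimN_inner (b : ℕ) (n : ℕ+) :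
    HasSum (fun m : ℕ+ ↦ 1 / ((n : ℝ) ^ b * (m : ℝ) ^ 1 * ((n + m : ℕ) : ℝ) ^ 1))
      (harmonic n / (n : ℝ) ^ (b + 1)) := by
  have h := (hasSum_one_div_sub_one_div_add n).mul_left (1 / (n : ℝ) ^ (b + 1))
  rw [← one_div_mul_eq_div]
  refine h.congr_fun fun m ↦ ?_
  push_cast
  field_simp
  ring

theorem tornheimN_eq_tsum_harmonic (b : ℕ) :
    tornheimN b 1 1 = ∑' n : ℕ+, (harmonic n : ℝ) / (n : ℝ) ^ (b + 1) :=
  tsum_congr fun n ↦ (hasSum_tornheimN_inner b n).tsum_eq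

theorem harmonic_le_self (n : ℕ) : harmonic n ≤ n := by
  simpa [harmonic] using sum_le_card_nsmul (range n) (fun i ↦ ((i + 1 : ℕ) : ℚ)⁻¹) 1
    fun i _ ↦ inv_le_one_of_one_le₀ (by simp)

theorem harmonic_eq_harmonic_pred_add (N : ℕ+) :
    (harmonic N : ℝ) = harmonic (N - 1) + 1 / (N : ℝ) := by
  obtain ⟨k, hk⟩ : ∃ k : ℕ, (N : ℕ) = k + 1 := ⟨N - 1, by have := N.pos; omega⟩
  rw [hk, harmonic_succ, Nat.add_sub_cancel]
  push_cast
  ring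

theorem summable_one_div_pnat_pow {k : ℕ} (hk : 2 ≤ k) :
    Summable fun n : ℕ+ ↦ 1 / (n : ℝ) ^ k :=
  summable_pnat_iff_summable_nat.2 (Real.summable_one_div_nat_pow.2 (by omega))

theorem summable_harmonic_div_pow {b : ℕ} (hb : 2 ≤ b) :
    Summable fun n : ℕ+ ↦ (harmonic n : ℝ) / (n : ℝ) ^ (b + 1) := by
  refine (summable_one_div_pnat_pow hb).of_nonneg_of_le
    (fun n ↦ div_nonneg (mod_cast (harmonic_pos n.ne_zero).le) (by positivity)) fun n ↦ ?_
  calc (harmonic n : ℝ) / (n : ℝ) ^ (b + 1) ≤ (n : ℝ) / (n : ℝ) ^ (b + 1) := by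
        gcongr
        exact_mod_cast harmonic_le_self n
    _ = 1 / (n : ℝ) ^ b := by field_simp; ring

theorem summable_harmonic_pred_div_pow {b : ℕ} (hb : 2 ≤ b) :
    Summable fun n : ℕ+ ↦ (harmonic (n - 1) : ℝ) / (n : ℝ) ^ (b + 1) := by
  have hzeta := summable_one_div_pnat_pow (k := b + 2) (by omega)
  refine ((summable_harmonic_div_pow hb).sub hzeta).congr fun n ↦ ?_
  rw [harmonic_eq_harmonic_pred_add]
  field_simp
  ring

noncomputable def partialFracTerm (b : ℕ) (p : ℕ+ × ℕ+) : ℝ :=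
  1 / ((p.1 : ℝ) * ((p.1 + p.2 : ℕ) : ℝ) ^ (b + 1))

noncomputable def lowerTriangleTerm (b : ℕ) (q : ℕ+ × ℕ+) : ℝ :=
  if (q.2 : ℕ) < q.1 then 1 / ((q.2 : ℝ) * (q.1 : ℝ) ^ (b + 1)) else 0

theorem one_div_mul_add_pow_eq_partialFracTerm_add_swap (b : ℕ) (p : ℕ+ × ℕ+) :
    1 / ((p.1 : ℝ) * (p.2 : ℝ) * ((p.1 + p.2 : ℕ) : ℝ) ^ b)
      = partialFracTerm b p + partialFracTerm b p.swap := by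
  simp only [partialFracTerm, Prod.fst_swap, Prod.snd_swap, add_comm (p.2 : ℕ)]
  push_cast
  field_simp
  ring

theorem lowerTriangleTerm_add_fst (b : ℕ) (p : ℕ+ × ℕ+) :
    lowerTriangleTerm b (p.1 + p.2, p.1) = partialFracTerm b p := by
  simp [lowerTriangleTerm, partialFracTerm]

theorem injective_add_fst : Function.Injective fun p : ℕ+ × ℕ+ ↦ (p.1 + p.2, p.1) := by
  rintro ⟨n, m⟩ ⟨n', m'⟩ h
  simp only [Prod.mk.injEq] at h
  obtain ⟨hsum, rfl⟩ := h
  simpa using hsum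

theorem support_lowerTriangleTerm_subset (b : ℕ) :
    Function.support (lowerTriangleTerm b) ⊆ Set.range fun p : ℕ+ × ℕ+ ↦ (p.1 + p.2, p.1) := by
  rintro ⟨N, n⟩ hq
  have hlt : (n : ℕ) < N := by
    by_contra h
    exact hq (by simp [lowerTriangleTerm, h])
  refine ⟨(n, ⟨N - n, Nat.sub_pos_of_lt hlt⟩), Prod.ext (PNat.eq ?_) rfl⟩
  change (n : ℕ) + (N - n) = N
  omega

theorem hasSum_lowerTriangleTerm_fiber (b : ℕ) (N : ℕ+) :
    HasSum (fun n ↦ lowerTriangleTerm b (N, n)) (harmonic (N - 1) / (N : ℝ) ^ (b + 1)) := by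
  set g : ℕ → ℝ := fun k ↦ if k < N then 1 / ((k : ℝ) * (N : ℝ) ^ (b + 1)) else 0
  -- the extra term at `k = 0` vanishes only because `1 / 0 = 0`
  have hg₀ : g 0 = 0 := by simp [g]
  have hg : HasSum g (∑ k ∈ range N, g k) :=
    hasSum_sum_of_ne_finset_zero fun k hk ↦ if_neg (by simpa using hk)
  have hsum : ∑ k ∈ range N, g k = harmonic (N - 1) / (N : ℝ) ^ (b + 1) := by
    obtain ⟨k, hk⟩ : ∃ k : ℕ, (N : ℕ) = k + 1 := ⟨N - 1, by have := N.pos; omega⟩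
    rw [hk, sum_range_succ', Nat.add_sub_cancel, harmonic, Rat.cast_sum, sum_div]
    rw [hg₀, add_zero]
    refine sum_congr rfl fun i hi ↦ ?_
    rw [mem_range] at hi
    have hN : ((N : ℕ) : ℝ) = k + 1 := by exact_mod_cast hk
    simp only [g, if_pos (show i + 1 < N by omega), hN]
    push_cast
    field_simp
  rw [hsum] at hg
  exact (hasSum_pnat_iff (f := g)).2 (by rwa [hg₀, add_zero])

theorem summable_lowerTriangleTerm {b : ℕ} (hb : 2 ≤ b) : Summable (lowerTriangleTerm b) := by
  have hnonneg : 0 ≤ lowerTriangleTerm b := fun q ↦ by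
    unfold lowerTriangleTerm; split_ifs <;> positivity
  refine (summable_prod_of_nonneg hnonneg).2
    ⟨fun N ↦ (hasSum_lowerTriangleTerm_fiber b N).summable, ?_⟩
  simpa only [(hasSum_lowerTriangleTerm_fiber b _).tsum_eq]
    using summable_harmonic_pred_div_pow hb

theorem summable_partialFracTerm {b : ℕ} (hb : 2 ≤ b) : Summable (partialFracTerm b) := by
  have h := (injective_add_fst.summable_iff
    (Function.support_subset_iff'.1 (support_lowerTriangleTerm_subset b))).2
    (summable_lowerTriangleTerm hb)
  simpa only [Function.comp_def, lowerTriangleTerm_add_fst] using h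

theorem tsum_partialFracTerm {b : ℕ} (hb : 2 ≤ b) :
    ∑' p, partialFracTerm b p = ∑' N : ℕ+, (harmonic (N - 1) : ℝ) / (N : ℝ) ^ (b + 1) := by
  simp only [← lowerTriangleTerm_add_fst]
  rw [injective_add_fst.tsum_eq (support_lowerTriangleTerm_subset b),
    (summable_lowerTriangleTerm hb).tsum_prod' fun N ↦
      (hasSum_lowerTriangleTerm_fiber b N).summable]
  exact tsum_congr fun N ↦ (hasSum_lowerTriangleTerm_fiber b N).tsum_eq

theorem tornheimN_one_one_eq_two_mul_tsum_harmonic {b : ℕ} (hb : 2 ≤ b) :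
    tornheimN 1 1 b = 2 * ∑' N : ℕ+, (harmonic (N - 1) : ℝ) / (N : ℝ) ^ (b + 1) := by
  have hu := summable_partialFracTerm hb
  have hsummable : Summable fun p : ℕ+ × ℕ+ ↦
      1 / ((p.1 : ℝ) * (p.2 : ℝ) * ((p.1 + p.2 : ℕ) : ℝ) ^ b) := by
    simpa only [one_div_mul_add_pow_eq_partialFracTerm_add_swap] using hu.add hu.prod_symm
  have htsum_swap : ∑' p : ℕ+ × ℕ+, partialFracTerm b p.swap = ∑' p, partialFracTerm b p :=
    (Equiv.prodComm ℕ+ ℕ+).tsum_eq _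
  simp only [tornheimN, pow_one]
  rw [← hsummable.tsum_prod' hsummable.prod_factor]
  simp only [one_div_mul_add_pow_eq_partialFracTerm_add_swap]
  rw [hu.tsum_add hu.prod_symm, htsum_swap, tsum_partialFracTerm hb, two_mul]

theorem riemannZeta_natCast_eq_tsum_pnat {k : ℕ} (hk : 1 < k) :
    riemannZeta k = ((∑' n : ℕ+, 1 / (n : ℝ) ^ k : ℝ) : ℂ) := by
  rw [zeta_nat_eq_tsum_of_gt_one hk, Complex.ofReal_tsum,
    ← tsum_pnat_eq_tsum_of_eq_zero (by simp [show k ≠ 0 by omega])]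
  push_cast
  rfl

theorem two_mul_tornheimN_sub_tornheimN {b : ℕ} (hb : 2 ≤ b) :
    2 * tornheimN b 1 1 - tornheimN 1 1 b = 2 * ∑' n : ℕ+, 1 / (n : ℝ) ^ (b + 2) := by
  rw [tornheimN_eq_tsum_harmonic, tornheimN_one_one_eq_two_mul_tsum_harmonic hb, ← mul_sub,
    ← (summable_harmonic_div_pow hb).tsum_sub (summable_harmonic_pred_div_pow hb)]
  congr 1
  refine tsum_congr fun n ↦ ?_
  rw [harmonic_eq_harmonic_pred_add]
  field_simp
  ring

theorem tornheim_two_rel (a : ℕ) (ha : 4 ≤ a) :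
    ((2 * tornheimN (a - 2) 1 1 - tornheimN 1 1 (a - 2) : ℝ) : ℂ)
      = 2 * riemannZeta a := by
  obtain ⟨b, rfl⟩ : ∃ b, a = b + 2 := ⟨a - 2, by omega⟩
  rw [Nat.add_sub_cancel, two_mul_tornheimN_sub_tornheimN (by omega),
    riemannZeta_natCast_eq_tsum_pnat (by omega)]
  push_cast
  rfl
end

section
/- For an integer a \ge 4, T(1,0,a-1) = (1/2) T(1,1,a-2). -/
private lemma pnat_sq_summable : Summable (fun n : ℕ+ => 1 / ((n : ℕ) : ℝ) ^ 2) := by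
  have h : Summable (fun n : ℕ => 1 / (n : ℝ) ^ 2) :=
    Real.summable_one_div_nat_pow.2 one_lt_two
  exact h.comp_injective PNat.coe_injective

set_option maxHeartbeats 1000000 in
private lemma F_summable (c : ℕ) (hc : 2 ≤ c) :
    Summable (fun p : ℕ+ × ℕ+ =>
      1 / (((p.1 : ℕ) : ℝ) * (((p.1 : ℕ) : ℝ) + ((p.2 : ℕ) : ℝ)) ^ (c + 1))) := by
  have hb : Summable (fun p : ℕ+ × ℕ+ =>
      (1 / ((p.1 : ℕ) : ℝ) ^ 2) * (1 / ((p.2 : ℕ) : ℝ) ^ 2)) :=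
    pnat_sq_summable.mul_of_nonneg pnat_sq_summable
      (fun _ => by positivity) (fun _ => by positivity)
  refine Summable.of_nonneg_of_le (fun p => by positivity) (fun p => ?_) hb
  set N : ℝ := ((p.1 : ℕ) : ℝ) with hN
  set M : ℝ := ((p.2 : ℕ) : ℝ) with hM
  have hN1 : 1 ≤ N := by rw [hN]; exact Nat.one_le_cast.2 p.1.pos
  have hM1 : 1 ≤ M := by rw [hM]; exact Nat.one_le_cast.2 p.2.pos
  have hN0 : 0 < N := lt_of_lt_of_le one_pos hN1
  have hM0 : 0 < M := lt_of_lt_of_le one_pos hM1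
  rw [one_div_mul_one_div]
  apply one_div_le_one_div_of_le (by positivity)
  have h3 : (N + M) ^ 3 ≤ (N + M) ^ (c + 1) :=
    pow_le_pow_right₀ (by linarith) (by omega)
  have h4 : N * M ^ 2 ≤ (N + M) ^ 3 := by nlinarith [sq_nonneg N, sq_nonneg M, mul_pos hN0 hM0, mul_pos (mul_pos hN0 hN0) hM0]
  calc N ^ 2 * M ^ 2 = N * (N * M ^ 2) := by ring
    _ ≤ N * (N + M) ^ 3 := by
        exact mul_le_mul_of_nonneg_left h4 hN0.le
    _ ≤ N * (N + M) ^ (c + 1) := mul_le_mul_of_nonneg_left h3 hN0.le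

set_option maxHeartbeats 1000000 in
theorem tornheim_one_zero (a : ℕ) (ha : 4 ≤ a) :
    tornheimN 1 0 (a - 1) = (1 / 2) * tornheimN 1 1 (a - 2) := by
  set c := a - 2 with hc
  have hc2 : 2 ≤ c := by omega
  have ha1 : a - 1 = c + 1 := by omega
  set F : ℕ+ × ℕ+ → ℝ := fun p =>
    1 / (((p.1 : ℕ) : ℝ) * (((p.1 : ℕ) : ℝ) + ((p.2 : ℕ) : ℝ)) ^ (c + 1)) with hF
  have hFs : Summable F := F_summable c hc2
  -- left side
  have hL : tornheimN 1 0 (a - 1) = ∑' p : ℕ+ × ℕ+, F p := by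
    rw [Summable.tsum_prod hFs, tornheimN, ha1]
    refine tsum_congr fun n => tsum_congr fun m => ?_
    simp only [hF, pow_one, pow_zero, mul_one]
    push_cast
    ring_nf
  -- pointwise identity
  have key : ∀ n m : ℕ+,
      1 / (((n : ℕ) : ℝ) ^ 1 * ((m : ℕ) : ℝ) ^ 1 * (((n : ℕ) + (m : ℕ) : ℕ) : ℝ) ^ c)
        = F (n, m) + F (m, n) := by
    intro n m
    have hn : (0 : ℝ) < ((n : ℕ) : ℝ) := by exact_mod_cast n.pos
    have hm : (0 : ℝ) < ((m : ℕ) : ℝ) := by exact_mod_cast m.pos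
    have hnm : (0 : ℝ) < ((n : ℕ) : ℝ) + ((m : ℕ) : ℝ) := by linarith
    simp only [hF, pow_one]
    push_cast
    rw [pow_succ]
    field_simp
    ring
  have hR : tornheimN 1 1 c = 2 * ∑' p : ℕ+ × ℕ+, F p := by
    have hswap : Summable (fun p : ℕ+ × ℕ+ => F p.swap) := hFs.prod_symm
    have hG : Summable (fun p : ℕ+ × ℕ+ => F p + F p.swap) := hFs.add hswap
    have e1 : tornheimN 1 1 c = ∑' p : ℕ+ × ℕ+, (F p + F p.swap) := by
      rw [Summable.tsum_prod hG, tornheimN]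
      refine tsum_congr fun n => tsum_congr fun m => ?_
      exact key n m
    rw [e1, Summable.tsum_add hFs hswap]
    have e2 : ∑' p : ℕ+ × ℕ+, F p.swap = ∑' p : ℕ+ × ℕ+, F p :=
      (Equiv.prodComm ℕ+ ℕ+).tsum_eq F
    rw [e2]; ring
  rw [hL, hR]; ring
end

section
/- T(1,1,2) = \zeta(4)/2 = \pi^4/180. -/
open Real Function Set

namespace TornAux

noncomputable def H (p : ℕ+ × ℕ+) : ℝ := 1 / (((p.1 : ℕ) : ℝ) ^ 2 * ((p.2 : ℕ) : ℝ) ^ 2)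

noncomputable def G (p : ℕ+ × ℕ+) : ℝ :=
  1 / (((p.1 : ℕ) : ℝ) ^ 2 * (((p.1 : ℕ) : ℝ) + ((p.2 : ℕ) : ℝ)) ^ 2)

noncomputable def F (p : ℕ+ × ℕ+) : ℝ :=
  1 / (((p.1 : ℕ) : ℝ) * ((p.2 : ℕ) : ℝ) * (((p.1 : ℕ) : ℝ) + ((p.2 : ℕ) : ℝ)) ^ 2)

lemma pnat_pos_real (n : ℕ+) : (0 : ℝ) < ((n : ℕ) : ℝ) := by
  exact_mod_cast n.pos

lemma hasSum_pnat_of_nat {f : ℕ → ℝ} {a : ℝ} (h0 : f 0 = 0) (h : HasSum f a) :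
    HasSum (fun n : ℕ+ => f (n : ℕ)) a := by
  have hinj : Injective (fun n : ℕ+ => (n : ℕ)) := fun a b h => by
    exact PNat.coe_injective h
  rw [show (fun n : ℕ+ => f (n : ℕ)) = f ∘ (fun n : ℕ+ => (n : ℕ)) from rfl]
  rw [hinj.hasSum_iff]
  · exact h
  · intro n hn
    rcases Nat.eq_zero_or_pos n with h1 | h1
    · simpa [h1] using h0
    · exact absurd ⟨⟨n, h1⟩, rfl⟩ hn

lemma zeta2 : HasSum (fun n : ℕ+ => 1 / ((n : ℕ) : ℝ) ^ 2) (π ^ 2 / 6) :=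
  hasSum_pnat_of_nat (f := fun n : ℕ => 1 / (n : ℝ) ^ 2) (by norm_num) hasSum_zeta_two

lemma zeta4 : HasSum (fun n : ℕ+ => 1 / ((n : ℕ) : ℝ) ^ 4) (π ^ 4 / 90) :=
  hasSum_pnat_of_nat (f := fun n : ℕ => 1 / (n : ℝ) ^ 4) (by norm_num) hasSum_zeta_four

lemma sumZ2 : Summable (fun n : ℕ+ => 1 / ((n : ℕ) : ℝ) ^ 2) := zeta2.summable

lemma sumH : Summable H := by
  have := sumZ2.mul_of_nonneg sumZ2 (fun n => by positivity) (fun n => by positivity)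
  refine this.congr fun p => ?_
  simp only [H, div_mul_div_comm, one_mul]

lemma tsumH : ∑' p, H p = π ^ 4 / 36 := by
  have h1 : Summable fun n : ℕ+ => ‖1 / ((n : ℕ) : ℝ) ^ 2‖ := by
    refine sumZ2.congr fun n => ?_
    rw [Real.norm_eq_abs, abs_of_nonneg (by positivity)]
  have := tsum_mul_tsum_of_summable_norm h1 h1
  have h2 : ∑' p : ℕ+ × ℕ+, (1 / ((p.1 : ℕ) : ℝ) ^ 2) * (1 / ((p.2 : ℕ) : ℝ) ^ 2)
      = (∑' n : ℕ+, 1 / ((n : ℕ) : ℝ) ^ 2) * ∑' n : ℕ+, 1 / ((n : ℕ) : ℝ) ^ 2 := this.symm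
  rw [zeta2.tsum_eq] at h2
  calc ∑' p, H p = ∑' p : ℕ+ × ℕ+, (1 / ((p.1 : ℕ) : ℝ) ^ 2) * (1 / ((p.2 : ℕ) : ℝ) ^ 2) := by
        refine tsum_congr fun p => ?_
        simp only [H, div_mul_div_comm, one_mul]
    _ = π ^ 4 / 36 := by rw [h2]; ring

lemma G_le_H (p : ℕ+ × ℕ+) : G p ≤ H p := by
  have h1 := pnat_pos_real p.1
  have h2 := pnat_pos_real p.2
  unfold G H
  have hle : ((p.1 : ℕ) : ℝ) ^ 2 * ((p.2 : ℕ) : ℝ) ^ 2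
      ≤ ((p.1 : ℕ) : ℝ) ^ 2 * (((p.1 : ℕ) : ℝ) + ((p.2 : ℕ) : ℝ)) ^ 2 := by
    have hm : ((p.2 : ℕ) : ℝ) ^ 2 ≤ (((p.1 : ℕ) : ℝ) + ((p.2 : ℕ) : ℝ)) ^ 2 := by nlinarith
    exact mul_le_mul_of_nonneg_left hm (by positivity)
  exact one_div_le_one_div_of_le (by positivity) hle

lemma F_le_H (p : ℕ+ × ℕ+) : F p ≤ H p := by
  have h1 := pnat_pos_real p.1
  have h2 := pnat_pos_real p.2
  unfold F H
  have hle : ((p.1 : ℕ) : ℝ) ^ 2 * ((p.2 : ℕ) : ℝ) ^ 2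
      ≤ ((p.1 : ℕ) : ℝ) * ((p.2 : ℕ) : ℝ) * (((p.1 : ℕ) : ℝ) + ((p.2 : ℕ) : ℝ)) ^ 2 := by
    nlinarith [sq_nonneg (((p.1 : ℕ) : ℝ) - ((p.2 : ℕ) : ℝ)), mul_pos h1 h2]
  exact one_div_le_one_div_of_le (by positivity) hle

lemma sumG : Summable G :=
  sumH.of_nonneg_of_le (fun p => by unfold G; positivity) G_le_H

lemma sumF : Summable F :=
  sumH.of_nonneg_of_le (fun p => by unfold F; positivity) F_le_H

lemma sumGswap : Summable (fun p : ℕ+ × ℕ+ => G p.swap) :=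
  (Equiv.prodComm ℕ+ ℕ+).summable_iff.mpr sumG

lemma tsumGswap : ∑' p : ℕ+ × ℕ+, G p.swap = ∑' p, G p :=
  (Equiv.prodComm ℕ+ ℕ+).tsum_eq G

lemma key_pointwise (p : ℕ+ × ℕ+) : H p = G p + G p.swap + 2 * F p := by
  have h1 := pnat_pos_real p.1
  have h2 := pnat_pos_real p.2
  unfold H G F
  simp only [Prod.fst_swap, Prod.snd_swap]
  field_simp
  ring

/-- the "lt" indicator sum equals ∑ G -/
lemma tsum_lt : ∑' p : ℕ+ × ℕ+, Set.indicator {q : ℕ+ × ℕ+ | q.1 < q.2} H p = ∑' p, G p := by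
  have hinj : Injective (fun p : ℕ+ × ℕ+ => ((p.1, p.1 + p.2) : ℕ+ × ℕ+)) := by
    rintro ⟨a1, a2⟩ ⟨b1, b2⟩ h
    simp only [Prod.mk.injEq] at h ⊢
    obtain ⟨h1, h2⟩ := h
    refine ⟨h1, ?_⟩
    rw [h1] at h2
    exact add_left_cancel h2
  have hsupp : support (Set.indicator {q : ℕ+ × ℕ+ | q.1 < q.2} H)
      ⊆ Set.range (fun p : ℕ+ × ℕ+ => (p.1, p.1 + p.2)) := by
    intro q hq
    have hq' : q.1 < q.2 := by
      by_contra hlt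
      exact hq (Set.indicator_of_notMem (s := {q : ℕ+ × ℕ+ | q.1 < q.2}) hlt H)
    refine ⟨(q.1, q.2 - q.1), ?_⟩
    have : q.1 + (q.2 - q.1) = q.2 := PNat.add_sub_of_lt hq'
    simp [this]
  rw [← hinj.tsum_eq hsupp]
  refine tsum_congr fun p => ?_
  have hmem : (p.1, p.1 + p.2) ∈ {q : ℕ+ × ℕ+ | q.1 < q.2} := by
    simp [PNat.lt_add_right]
  rw [Set.indicator_of_mem hmem]
  unfold H G
  push_cast
  ring_nf

/-- the "gt" indicator sum also equals ∑ G -/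
lemma tsum_gt : ∑' p : ℕ+ × ℕ+, Set.indicator {q : ℕ+ × ℕ+ | q.2 < q.1} H p = ∑' p, G p := by
  have hinj : Injective (fun p : ℕ+ × ℕ+ => ((p.1 + p.2, p.1) : ℕ+ × ℕ+)) := by
    rintro ⟨a1, a2⟩ ⟨b1, b2⟩ h
    simp only [Prod.mk.injEq] at h ⊢
    obtain ⟨h2, h1⟩ := h
    refine ⟨h1, ?_⟩
    rw [h1] at h2
    exact add_left_cancel h2
  have hsupp : support (Set.indicator {q : ℕ+ × ℕ+ | q.2 < q.1} H)
      ⊆ Set.range (fun p : ℕ+ × ℕ+ => (p.1 + p.2, p.1)) := by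
    intro q hq
    have hq' : q.2 < q.1 := by
      by_contra hlt
      exact hq (Set.indicator_of_notMem (s := {q : ℕ+ × ℕ+ | q.2 < q.1}) hlt H)
    refine ⟨(q.2, q.1 - q.2), ?_⟩
    have : q.2 + (q.1 - q.2) = q.1 := PNat.add_sub_of_lt hq'
    simp [this]
  rw [← hinj.tsum_eq hsupp]
  refine tsum_congr fun p => ?_
  have hmem : (p.1 + p.2, p.1) ∈ {q : ℕ+ × ℕ+ | q.2 < q.1} := by
    simp [PNat.lt_add_right]
  rw [Set.indicator_of_mem hmem]
  unfold H G
  push_cast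
  ring_nf

/-- the diagonal indicator sum -/
lemma tsum_diag : ∑' p : ℕ+ × ℕ+, Set.indicator {q : ℕ+ × ℕ+ | q.1 = q.2} H p = π ^ 4 / 90 := by
  have hinj : Injective (fun n : ℕ+ => ((n, n) : ℕ+ × ℕ+)) := by
    intro a b h; exact congrArg Prod.fst h
  have hsupp : support (Set.indicator {q : ℕ+ × ℕ+ | q.1 = q.2} H)
      ⊆ Set.range (fun n : ℕ+ => ((n, n) : ℕ+ × ℕ+)) := by
    intro q hq
    have hq' : q.1 = q.2 := by
      by_contra hlt
      exact hq (Set.indicator_of_notMem (s := {q : ℕ+ × ℕ+ | q.1 = q.2}) hlt H)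
    exact ⟨q.1, by ext <;> simp [hq'.symm]⟩
  rw [← hinj.tsum_eq hsupp, ← zeta4.tsum_eq]
  refine tsum_congr fun n => ?_
  rw [Set.indicator_of_mem (by simp : ((n, n) : ℕ+ × ℕ+) ∈ {q : ℕ+ × ℕ+ | q.1 = q.2})]
  unfold H
  ring_nf

lemma indicator_split (p : ℕ+ × ℕ+) :
    H p = Set.indicator {q : ℕ+ × ℕ+ | q.1 < q.2} H p
      + Set.indicator {q : ℕ+ × ℕ+ | q.1 = q.2} H p
      + Set.indicator {q : ℕ+ × ℕ+ | q.2 < q.1} H p := by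
  simp only [Set.indicator_apply, Set.mem_setOf_eq]
  rcases lt_trichotomy p.1 p.2 with h | h | h
  · rw [if_pos h, if_neg (ne_of_lt h), if_neg (not_lt.2 h.le)]; ring
  · rw [if_neg (by simp [h]), if_pos h, if_neg (by simp [h])]; ring
  · rw [if_neg (not_lt.2 h.le), if_neg (ne_of_gt h), if_pos h]; ring

lemma tsumG : ∑' p, G p = π ^ 4 / 120 := by
  have s1 := sumH.indicator {q : ℕ+ × ℕ+ | q.1 < q.2}
  have s2 := sumH.indicator {q : ℕ+ × ℕ+ | q.1 = q.2}
  have s3 := sumH.indicator {q : ℕ+ × ℕ+ | q.2 < q.1}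
  have hsplit : ∑' p, H p
      = (∑' p, Set.indicator {q : ℕ+ × ℕ+ | q.1 < q.2} H p)
        + (∑' p, Set.indicator {q : ℕ+ × ℕ+ | q.1 = q.2} H p)
        + (∑' p, Set.indicator {q : ℕ+ × ℕ+ | q.2 < q.1} H p) := by
    rw [← Summable.tsum_add s1 s2, ← Summable.tsum_add (s1.add s2) s3]
    exact tsum_congr indicator_split
  rw [tsumH, tsum_lt, tsum_diag, tsum_gt] at hsplit
  linarith

lemma tsumF : ∑' p, F p = π ^ 4 / 180 := by
  have : ∑' p, H p = (∑' p, G p) + (∑' p : ℕ+ × ℕ+, G p.swap) + 2 * ∑' p, F p := by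
    rw [← tsum_mul_left, ← Summable.tsum_add sumG sumGswap,
      ← Summable.tsum_add (sumG.add sumGswap) (sumF.mul_left 2)]
    exact tsum_congr key_pointwise
  rw [tsumH, tsumGswap, tsumG] at this
  linarith

lemma tornheim_val : tornheimN 1 1 2 = π ^ 4 / 180 := by
  rw [← tsumF, Summable.tsum_prod' sumF sumF.prod_factor]
  unfold tornheimN
  refine tsum_congr fun n => tsum_congr fun m => ?_
  unfold F
  push_cast
  ring_nf

end TornAux

theorem tornheim_112 :
    ((tornheimN 1 1 2 : ℝ) : ℂ) = riemannZeta 4 / 2 ∧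
      tornheimN 1 1 2 = Real.pi ^ 4 / 180 := by
  have h := TornAux.tornheim_val
  constructor
  · rw [h, riemannZeta_four]
    push_cast
    ring
  · exact h
end

section
/- T(2,3,2) = -(\pi^2/6)\zeta(5) + 2\zeta(7). -/
/-!
Partial fractions, `1 / (n m) = (1 / n + 1 / m) / (n + m)`, give
`T(a+1,b+1,c) = T(a,b+1,c+1) + T(a+1,b,c+1)`, which reduces every `T` of weight 7 to the products
`T(a,b,0) = ζ(a) ζ(b)` and the double zeta values `T(0,b,c) = ∑_{m<k} m^{-b} k^{-c}`. Two
families of relations among the latter close the linear system. Splitting the product of two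
zeta series along the diagonal gives the stuffle relation
`ζ(b) ζ(c) = T(b,0,c) + ζ(b+c) + T(0,c,b)`. For Euler's relation
`T(s,1,1) = ζ(s+2) + T(0,1,s+1)`, sum `1 / (m (k+m)) = (1/m - 1/(k+m)) / k` over `m`; it
telescopes to `H_k / k`, and `∑_k H_k / k^{s+1} = ∑_{n ≤ k} 1 / (n k^{s+1})` is split along the
diagonal in the same way.
-/

open Filter Topology Set Function

theorem hasSum_pnat_prod_of_lt_diag_gt {M : Type*} [AddCommMonoid M] [TopologicalSpace M]
    [ContinuousAdd M] {F : ℕ+ × ℕ+ → M} {x y z : M}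
    (hlt : HasSum (fun q : ℕ+ × ℕ+ => F (q.1, q.1 + q.2)) x)
    (hdiag : HasSum (fun k : ℕ+ => F (k, k)) y)
    (hgt : HasSum (fun q : ℕ+ × ℕ+ => F (q.1 + q.2, q.2)) z) :
    HasSum F (x + y + z) := by
  have inj_lt : Injective fun q : ℕ+ × ℕ+ => (q.1, q.1 + q.2) := by
    rintro ⟨a, b⟩ ⟨c, d⟩ h
    simp only [Prod.mk.injEq] at h
    obtain ⟨rfl, h⟩ := h
    simp [add_left_cancel h]
  have inj_gt : Injective fun q : ℕ+ × ℕ+ => (q.1 + q.2, q.2) := by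
    rintro ⟨a, b⟩ ⟨c, d⟩ h
    simp only [Prod.mk.injEq] at h
    obtain ⟨h, rfl⟩ := h
    simp [add_right_cancel h]
  have range_lt : range (fun q : ℕ+ × ℕ+ => (q.1, q.1 + q.2)) = {p | p.1 < p.2} := by
    ext ⟨a, b⟩
    refine ⟨?_, fun h => ⟨(a, b - a), by simp [PNat.add_sub_of_lt h]⟩⟩
    rintro ⟨⟨c, d⟩, ⟨⟩⟩
    exact PNat.lt_add_right c d
  have range_gt : range (fun q : ℕ+ × ℕ+ => (q.1 + q.2, q.2)) = {p | p.2 < p.1} := by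
    ext ⟨a, b⟩
    refine ⟨?_, fun h => ⟨(a - b, b), by simp [PNat.sub_add_of_lt h]⟩⟩
    rintro ⟨⟨c, d⟩, ⟨⟩⟩
    exact PNat.lt_add_left d c
  have hlt' := inj_lt.hasSum_range_iff.2 hlt
  have hdiag' := diag_injective.hasSum_range_iff.2 hdiag
  have hgt' := inj_gt.hasSum_range_iff.2 hgt
  rw [range_lt] at hlt'
  rw [range_diag] at hdiag'
  rw [range_gt] at hgt'
  refine (hlt'.add_disjoint ?_ hdiag').add_isCompl ?_ hgt'
  · exact disjoint_left.2 fun p (h : p.1 < p.2) h' => h.ne h'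
  · refine ⟨disjoint_left.2 fun p h (h' : p.2 < p.1) => ?_,
      codisjoint_iff.2 <| eq_univ_of_forall fun p => ?_⟩
    · rcases h with h | (h : p.1 = p.2)
      exacts [lt_asymm h h', h'.ne' h]
    · rcases lt_trichotomy p.1 p.2 with h | h | h
      exacts [Or.inl (Or.inl h), Or.inl (Or.inr h), Or.inr h]

theorem hasSum_sub_add_of_antitone {f : ℕ → ℝ} (hf : Antitone f) (h0 : Tendsto f atTop (𝓝 0))
    (k : ℕ) : HasSum (fun n => f n - f (n + k)) (∑ i ∈ Finset.range k, f i) := by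
  have partial_sum (N : ℕ) : ∑ n ∈ Finset.range N, (f n - f (n + k)) =
      ∑ i ∈ Finset.range k, f i - ∑ i ∈ Finset.range k, f (N + i) := by
    have h₁ := Finset.sum_range_add f N k
    have h₂ := Finset.sum_range_add f k N
    simp_rw [add_comm _ k] at h₁ h₂ ⊢
    rw [Finset.sum_sub_distrib]
    linarith
  rw [hasSum_iff_tendsto_nat_of_nonneg fun n => sub_nonneg.2 (hf (Nat.le_add_right n k))]
  simp_rw [partial_sum]
  simpa using tendsto_const_nhds.sub
    (tendsto_finsetSum _ fun i _ => h0.comp (tendsto_add_atTop_nat i))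

theorem hasSum_inv_sub_inv_add (k : ℕ) :
    HasSum (fun m : ℕ+ => (m : ℝ)⁻¹ - ((m : ℝ) + k)⁻¹) (harmonic k : ℝ) := by
  have hf : Antitone fun n : ℕ => ((n : ℝ) + 1)⁻¹ := fun i j h => by
    dsimp only
    gcongr
  have h0 : Tendsto (fun n : ℕ => ((n : ℝ) + 1)⁻¹) atTop (𝓝 0) := by
    simpa only [one_div] using tendsto_one_div_add_atTop_nhds_zero_nat (𝕜 := ℝ)
  rw [← Equiv.pnatEquivNat.symm.hasSum_iff]
  convert hasSum_sub_add_of_antitone hf h0 k using 1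
  · ext n
    simp only [comp_apply, Equiv.pnatEquivNat_symm_apply, Nat.succPNat_coe]
    push_cast
    ring_nf
  · simp [harmonic]

namespace Tornheim

noncomputable def term (a b c : ℕ) (p : ℕ+ × ℕ+) : ℝ :=
  ((p.1 : ℝ) ^ a * (p.2 : ℝ) ^ b * ((p.1 : ℝ) + p.2) ^ c)⁻¹

noncomputable def T (a b c : ℕ) : ℝ := ∑' p, term a b c p

noncomputable def Z (s : ℕ) : ℝ := ∑' n : ℕ+, ((n : ℝ) ^ s)⁻¹

variable {a b c s : ℕ}

lemma summable_Z (hs : 1 < s) : Summable fun n : ℕ+ => ((n : ℝ) ^ s)⁻¹ :=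
  (Real.summable_nat_pow_inv.2 hs).comp_injective PNat.coe_injective

lemma term_nonneg (a b c : ℕ) (p : ℕ+ × ℕ+) : 0 ≤ term a b c p := by
  unfold term
  positivity

-- The subtractions truncate: the condition is `max (2 - a) 0 + max (2 - b) 0 ≤ c`.
lemma summable_term (h : 2 - a + (2 - b) ≤ c) : Summable (term a b c) := by
  have hZ := summable_Z (s := 2) one_lt_two
  refine (hZ.mul_of_nonneg hZ (fun _ => by positivity) fun _ => by positivity).of_nonneg_of_le
    (term_nonneg a b c) fun ⟨n, m⟩ => ?_
  have hn : (1 : ℝ) ≤ n := by exact_mod_cast n.pos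
  have hm : (1 : ℝ) ≤ m := by exact_mod_cast m.pos
  have hnm : (1 : ℝ) ≤ n + m := by linarith
  rw [term, ← mul_inv]
  refine inv_anti₀ (by positivity) ?_
  calc (n : ℝ) ^ 2 * (m : ℝ) ^ 2 ≤ (n : ℝ) ^ (a + (2 - a)) * (m : ℝ) ^ (b + (2 - b)) := by
        gcongr <;> first | assumption | omega
    _ = (n : ℝ) ^ a * (m : ℝ) ^ b * ((n : ℝ) ^ (2 - a) * (m : ℝ) ^ (2 - b)) := by ring
    _ ≤ (n : ℝ) ^ a * (m : ℝ) ^ b * (((n : ℝ) + m) ^ (2 - a) * ((n : ℝ) + m) ^ (2 - b)) := by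
        gcongr <;> linarith
    _ ≤ (n : ℝ) ^ a * (m : ℝ) ^ b * ((n : ℝ) + m) ^ c := by
        rw [← pow_add]
        gcongr

lemma T_comm (a b c : ℕ) : T a b c = T b a c := by
  rw [T, T, ← (Equiv.prodComm ℕ+ ℕ+).tsum_eq]
  refine tsum_congr fun p => ?_
  simp only [term, Equiv.prodComm_apply, Prod.fst_swap, Prod.snd_swap]
  ring_nf

lemma term_succ_succ (a b c : ℕ) (p : ℕ+ × ℕ+) :
    term (a + 1) (b + 1) c p = term a (b + 1) (c + 1) p + term (a + 1) b (c + 1) p := by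
  have hn : (p.1 : ℝ) ≠ 0 := by positivity
  have hm : (p.2 : ℝ) ≠ 0 := by positivity
  have hnm : (p.1 : ℝ) + p.2 ≠ 0 := by positivity
  simp only [term]
  field_simp
  ring

lemma T_succ_succ (h : 2 - a + (2 - b) ≤ c + 1) :
    T (a + 1) (b + 1) c = T a (b + 1) (c + 1) + T (a + 1) b (c + 1) := by
  rw [T, T, T, ← (summable_term (by omega)).tsum_add (summable_term (by omega))]
  exact tsum_congr (term_succ_succ a b c)

lemma hasSum_term_zero (ha : 1 < a) (hb : 1 < b) : HasSum (term a b 0) (Z a * Z b) := by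
  have hprod := (summable_Z ha).mul_of_nonneg (summable_Z hb) (fun _ => by positivity)
    fun _ => by positivity
  refine ((summable_Z ha).hasSum.mul (summable_Z hb).hasSum hprod).congr_fun fun p => ?_
  simp only [term, pow_zero, mul_one, mul_inv]

lemma T_zero (ha : 1 < a) (hb : 1 < b) : T a b 0 = Z a * Z b :=
  (hasSum_term_zero ha hb).tsum_eq

lemma Z_mul_Z (hb : 1 < b) (hc : 1 < c) : Z b * Z c = T b 0 c + Z (b + c) + T 0 c b := by
  refine (hasSum_term_zero hb hc).unique (hasSum_pnat_prod_of_lt_diag_gt ?_ ?_ ?_)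
  · refine (summable_term (by omega)).hasSum.congr_fun fun q => ?_
    simp only [term, PNat.add_coe, Nat.cast_add, pow_zero, mul_one]
  · refine (summable_Z (by omega)).hasSum.congr_fun fun k => ?_
    simp only [term, pow_zero, mul_one, pow_add]
  · refine (summable_term (by omega)).hasSum.congr_fun fun q => ?_
    simp only [term, PNat.add_coe, Nat.cast_add, pow_zero, one_mul, mul_comm]

lemma hasSum_term_one_one_fiber (k : ℕ+) :
    HasSum (fun m => term s 1 1 (k, m)) (harmonic k / (k : ℝ) ^ (s + 1)) := by
  refine ((hasSum_inv_sub_inv_add k).div_const _).congr_fun fun m => ?_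
  simp only [term]
  field_simp
  ring

lemma hasSum_harmonic_div_pow (hs : 1 < s) :
    HasSum (fun k : ℕ+ => (harmonic k : ℝ) / (k : ℝ) ^ (s + 1)) (Z (s + 2) + T 0 1 (s + 1)) := by
  let G : ℕ+ × ℕ+ → ℝ := fun p => if p.2 ≤ p.1 then ((p.2 : ℝ) * (p.1 : ℝ) ^ (s + 1))⁻¹ else 0
  have hG : HasSum G (0 + Z (s + 2) + T 0 1 (s + 1)) := by
    refine hasSum_pnat_prod_of_lt_diag_gt (hasSum_zero.congr_fun fun q => ?_) ?_ ?_
    · exact if_neg (PNat.lt_add_right _ _).not_ge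
    · refine (summable_Z (by omega)).hasSum.congr_fun fun k => ?_
      simp only [G, le_refl, if_true]
      ring
    · refine (summable_term (by omega)).hasSum.congr_fun fun q => ?_
      simp only [G, if_pos (PNat.lt_add_left q.2 q.1).le, term, PNat.add_coe, Nat.cast_add]
      ring
  have hG_row (k : ℕ+) : HasSum (fun n => G (k, n)) (harmonic k / (k : ℝ) ^ (s + 1)) := by
    rw [← Equiv.pnatEquivNat.symm.hasSum_iff]
    have hsupp : ∀ i ∉ Finset.range k, G (k, Equiv.pnatEquivNat.symm i) = 0 := fun i hi => by
      refine if_neg fun h => hi (Finset.mem_range.2 ?_)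
      simpa [← PNat.coe_le_coe] using h
    have hsum : ∑ i ∈ Finset.range k, G (k, Equiv.pnatEquivNat.symm i) =
        harmonic k / (k : ℝ) ^ (s + 1) := by
      rw [harmonic, Rat.cast_sum, Finset.sum_div]
      refine Finset.sum_congr rfl fun i hi => ?_
      have hik : Equiv.pnatEquivNat.symm i ≤ k := by simpa [← PNat.coe_le_coe] using hi
      dsimp only [G]
      rw [if_pos hik, Equiv.pnatEquivNat_symm_apply, Nat.succPNat_coe, mul_inv, div_eq_mul_inv]
      push_cast
      rfl
    exact hsum ▸ hasSum_sum_of_ne_finset_zero hsupp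
  simpa using hG.prod_fiberwise hG_row

lemma T_one_one (hs : 1 < s) : T s 1 1 = Z (s + 2) + T 0 1 (s + 1) :=
  ((summable_term (by omega)).hasSum.prod_fiberwise hasSum_term_one_one_fiber).unique
    (hasSum_harmonic_div_pow hs)

lemma T_two_three_two : T 2 3 2 = 2 * Z 7 - Z 2 * Z 5 := by
  have r₁ := T_succ_succ (a := 1) (b := 4) (c := 0) (by norm_num)
  have r₂ := T_succ_succ (a := 0) (b := 4) (c := 1) (by norm_num)
  have r₃ := T_succ_succ (a := 0) (b := 3) (c := 2) (by norm_num)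
  have r₄ := T_succ_succ (a := 1) (b := 2) (c := 2) (by norm_num)
  have r₅ := T_succ_succ (a := 1) (b := 0) (c := 4) (by norm_num)
  have r₆ := T_succ_succ (a := 0) (b := 0) (c := 5) (by norm_num)
  have r₇ := T_succ_succ (a := 2) (b := 3) (c := 0) (by norm_num)
  have r₈ := T_succ_succ (a := 2) (b := 2) (c := 1) (by norm_num)
  have r₉ := T_succ_succ (a := 2) (b := 1) (c := 2) (by norm_num)
  have r₁₀ := T_succ_succ (a := 2) (b := 0) (c := 3) (by norm_num)
  have s₁ := Z_mul_Z (b := 2) (c := 5) (by norm_num) (by norm_num)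
  have s₂ := Z_mul_Z (b := 3) (c := 4) (by norm_num) (by norm_num)
  have e := T_one_one (s := 5) (by norm_num)
  norm_num at r₁ r₂ r₃ r₄ r₅ r₆ r₇ r₈ r₉ r₁₀ s₁ s₂ e
  linarith [T_comm 1 0 6, T_comm 5 1 1, T_zero (a := 2) (b := 5) (by norm_num) (by norm_num),
    T_zero (a := 3) (b := 4) (by norm_num) (by norm_num)]

lemma tornheimN_eq_T (h : 2 - a + (2 - b) ≤ c) : tornheimN a b c = T a b c := by
  rw [T, (summable_term h).tsum_prod]
  refine tsum_congr fun n => tsum_congr fun m => ?_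
  simp [term, one_div]

lemma Z_eq_tsum_nat (hs : s ≠ 0) : Z s = ∑' n : ℕ, ((n : ℝ) ^ s)⁻¹ :=
  tsum_pnat_eq_tsum_of_eq_zero (f := fun n : ℕ => ((n : ℝ) ^ s)⁻¹) (by simp [hs])

lemma Z_two : Z 2 = Real.pi ^ 2 / 6 := by
  simpa [Z_eq_tsum_nat, one_div] using hasSum_zeta_two.tsum_eq

lemma ofReal_Z (hs : 1 < s) : (Z s : ℂ) = riemannZeta s := by
  rw [zeta_nat_eq_tsum_of_gt_one hs, Z_eq_tsum_nat (by omega), Complex.ofReal_tsum]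
  simp [one_div]

end Tornheim

theorem tornheim_232 :
    ((tornheimN 2 3 2 : ℝ) : ℂ)
      = -((Real.pi : ℂ) ^ 2 / 6) * riemannZeta 5 + 2 * riemannZeta 7 := by
  rw [Tornheim.tornheimN_eq_T (by norm_num), Tornheim.T_two_three_two]
  push_cast
  rw [Tornheim.Z_two, Tornheim.ofReal_Z (s := 5) (by norm_num),
    Tornheim.ofReal_Z (s := 7) (by norm_num)]
  push_cast
  ring
end

section
/- For positive integers n1, n2, n3 with n1 + n2 \ge 2, \int_0^1 B_{n1}(q) B_{n2}(q) B_{n3}(q) dq = (-1)^{n3+1} n3! \sum_{k=0}^{\lfloor (n1+n2-1)/2 \rfloor} [ n1 \binom{n2}{2k} + n2 \binom{n1}{2k} ] \frac{(n1+n2-2k-1)!}{(n1+n2+n3-2k)!} B_{2k} B_{n1+n2+n3-2k}. -/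
/-!
Write `Δf = f(X + 1) - f` (that is, `taylor 1 f - f`) for `f ∈ ℚ[X]`. Since
`B_{m+1}' = (m + 1) B_m` and `B_{m+1}(1) = B_{m+1}(0)` for `m ≥ 1`, integrating by parts until `f`
is differentiated away gives
`∫₀¹ f B_m = ∑_j (-1)^j m! j! / (m + j + 1)! · [X^j] Δf · B_{m+j+1}`.
For `f = B_{n₁} B_{n₂}` the shift formula `B_n(X + 1) = B_n + n X^{n-1}` makes `Δf` explicit: its
coefficient of `X^{n₁+n₂-1-r}` is `(n₁ C(n₂, r) + n₂ C(n₁, r)) B_r` for even `r` and vanishes for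
odd `r` (at `r = 1` the two `B_1 = -1/2` terms cancel the `n₁ n₂ X^{n₁+n₂-2}` term). Finally
`(-1)^M B_M = B_M` for `M ≠ 1` turns every sign into `(-1)^{n₃+1}`.
-/

open Polynomial hiding bernoulli
open Finset
open scoped Nat

lemma derivative_taylor {R : Type*} [CommSemiring R] (r : R) (f : R[X]) :
    derivative (taylor r f) = taylor r (derivative f) := by
  simp [taylor_apply, derivative_comp]

lemma coeff_taylor_sub_self_of_natDegree_le {R : Type*} [CommRing R] (r : R) {f : R[X]} {n : ℕ}
    (hf : f.natDegree ≤ n) : (taylor r f - f).coeff n = 0 := by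
  rw [coeff_sub, sub_eq_zero]
  rcases hf.lt_or_eq with hlt | rfl
  · rw [coeff_eq_zero_of_natDegree_lt hlt,
      coeff_eq_zero_of_natDegree_lt ((natDegree_taylor f r).trans_lt hlt)]
  · rw [coeff_taylor_natDegree, coeff_natDegree]

lemma sum_range_ite_even {M : Type*} [AddCommMonoid M] (g : ℕ → M) (n : ℕ) :
    ∑ r ∈ range n, (if Even r then g r else 0) = ∑ k ∈ range ((n + 1) / 2), g (2 * k) := by
  rw [← sum_filter]
  symm
  refine sum_nbij' (2 * ·) (· / 2) ?_ ?_ ?_ ?_ ?_ <;> simp [Nat.even_iff] <;> omega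

lemma aeval_zero_bernoulli (n : ℕ) :
    aeval (0 : ℝ) (Polynomial.bernoulli n) = bernoulli n := by
  simp [aeval_def, eval₂_at_zero, coeff_bernoulli]

lemma aeval_one_bernoulli {n : ℕ} (hn : n ≠ 1) :
    aeval (1 : ℝ) (Polynomial.bernoulli n) = bernoulli n := by
  simp [aeval_def, eval₂_at_one, bernoulli_eval_one, bernoulli_eq_bernoulli'_of_ne_one hn]

lemma aeval_one_sub_aeval_zero (f : ℚ[X]) :
    aeval (1 : ℝ) f - aeval 0 f = (taylor 1 f - f).coeff 0 := by
  simp [coeff_zero_eq_eval_zero, taylor_eval, aeval_def, eval₂_at_one]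

lemma integral_aeval_mul_bernoulli_eq_sub (f : ℚ[X]) {m : ℕ} (hm : m ≠ 0) :
    (m + 1 : ℝ) * ∫ x in (0:ℝ)..1, aeval x f * aeval x (Polynomial.bernoulli m) =
      ((taylor 1 f - f).coeff 0 * bernoulli (m + 1) : ℚ) -
        ∫ x in (0:ℝ)..1, aeval x (derivative f) * aeval x (Polynomial.bernoulli (m + 1)) := by
  have hibp := intervalIntegral.integral_mul_deriv_eq_deriv_mul (a := 0) (b := 1)
    (fun x _ => f.hasDerivAt_aeval x)
    (fun x _ => (Polynomial.bernoulli (m + 1)).hasDerivAt_aeval x)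
    (f.derivative.continuous_aeval.intervalIntegrable _ _)
    ((Polynomial.bernoulli (m + 1)).derivative.continuous_aeval.intervalIntegrable _ _)
  simp only [derivative_bernoulli_add_one, map_mul, map_add, map_natCast, map_one,
    mul_left_comm _ (_ + 1 : ℝ), intervalIntegral.integral_const_mul] at hibp
  rw [hibp, aeval_one_bernoulli (by omega), aeval_zero_bernoulli, Rat.cast_mul,
    ← aeval_one_sub_aeval_zero]
  ring

theorem integral_aeval_mul_bernoulli_eq_sum {n : ℕ} (f : ℚ[X]) (hf : f.natDegree ≤ n) {m : ℕ}
    (hm : m ≠ 0) :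
    ∫ x in (0:ℝ)..1, aeval x f * aeval x (Polynomial.bernoulli m) =
      ((∑ j ∈ range (n + 1), (-1) ^ j * (m ! * j ! / (m + j + 1)! : ℚ) *
        (taylor 1 f - f).coeff j * bernoulli (m + j + 1) : ℚ) : ℝ) := by
  induction n generalizing f m with
  | zero =>
    rw [← mul_right_inj' (by positivity : (m + 1 : ℝ) ≠ 0),
      integral_aeval_mul_bernoulli_eq_sub f hm, derivative_of_natDegree_zero (by omega)]
    simp only [map_zero, zero_mul, intervalIntegral.integral_zero, sub_zero, zero_add,
      sum_range_one]
    norm_cast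
    rw [Nat.factorial_zero]
    push_cast [Nat.factorial_succ]
    field_simp
  | succ n ih =>
    have hdiff : ∀ j, (taylor 1 (derivative f) - derivative f).coeff j =
        (taylor 1 f - f).coeff (j + 1) * (j + 1) := fun j => by
      rw [← derivative_taylor, ← derivative_sub, coeff_derivative]
    rw [← mul_right_inj' (by positivity : (m + 1 : ℝ) ≠ 0),
      integral_aeval_mul_bernoulli_eq_sub f hm,
      ih (derivative f) ((natDegree_derivative_le f).trans (by omega)) (by omega)]
    norm_cast
    rw [sum_range_succ' _ (n + 1), mul_add, mul_sum, sub_eq_add_neg, add_comm, ← sum_neg_distrib]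
    congr 1
    · refine sum_congr rfl fun j _ => ?_
      rw [hdiff, show m + 1 + j + 1 = m + (j + 1) + 1 by ring]
      push_cast [Nat.factorial_succ]
      field_simp
      ring
    · rw [Nat.factorial_zero]
      push_cast [Nat.factorial_succ]
      field_simp

lemma natDegree_bernoulli_le (n : ℕ) : (Polynomial.bernoulli n).natDegree ≤ n :=
  natDegree_le_iff_coeff_eq_zero.2 fun i hi => by rw [coeff_bernoulli, if_neg (by omega)]

lemma natDegree_bernoulli_mul_le (a b : ℕ) :
    (Polynomial.bernoulli a * Polynomial.bernoulli b).natDegree ≤ a + b :=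
  natDegree_mul_le.trans (add_le_add (natDegree_bernoulli_le a) (natDegree_bernoulli_le b))

lemma taylor_one_bernoulli (n : ℕ) :
    taylor 1 (Polynomial.bernoulli n) = Polynomial.bernoulli n + (n : ℚ[X]) * X ^ (n - 1) := by
  rw [taylor_apply, C_1, add_comm, bernoulli_comp_one_add_X, nsmul_eq_mul]

lemma coeff_bernoulli_mul_X_pow {n b r : ℕ} (hr : r ≤ n + b) :
    (Polynomial.bernoulli n * X ^ b).coeff (n + b - r) = n.choose r * bernoulli r := by
  rw [coeff_mul_X_pow', coeff_bernoulli]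
  by_cases h : r ≤ n
  · rw [if_pos (by omega), if_pos (by omega), show n - (n + b - r - b) = r by omega,
      show n + b - r - b = n - r by omega, Nat.choose_symm h, mul_comm]
  · rw [if_neg (by omega), Nat.choose_eq_zero_of_lt (by omega), Nat.cast_zero, zero_mul]

lemma coeff_taylor_one_bernoulli_mul_sub {a b r : ℕ} (ha : 0 < a) (hb : 0 < b) (hr : r < a + b) :
    (taylor 1 (Polynomial.bernoulli a * Polynomial.bernoulli b) -
        Polynomial.bernoulli a * Polynomial.bernoulli b).coeff (a + b - 1 - r) =
      if Even r then (a * b.choose r + b * a.choose r) * bernoulli r else 0 := by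
  have hdiff : taylor 1 (Polynomial.bernoulli a * Polynomial.bernoulli b) -
      Polynomial.bernoulli a * Polynomial.bernoulli b =
        (b : ℚ[X]) * (Polynomial.bernoulli a * X ^ (b - 1)) +
          (a : ℚ[X]) * (Polynomial.bernoulli b * X ^ (a - 1)) +
            ((a * b : ℕ) : ℚ[X]) * X ^ (a - 1 + (b - 1)) := by
    rw [taylor_mul, taylor_one_bernoulli, taylor_one_bernoulli, pow_add]
    push_cast
    ring
  rw [hdiff, coeff_add, coeff_add, coeff_natCast_mul, coeff_natCast_mul, coeff_natCast_mul,
    coeff_X_pow, if_congr (show a + b - 1 - r = a - 1 + (b - 1) ↔ r = 1 by omega) rfl rfl,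
    show a + b - 1 - r = a + (b - 1) - r by omega, coeff_bernoulli_mul_X_pow (by omega),
    show a + (b - 1) - r = b + (a - 1) - r by omega, coeff_bernoulli_mul_X_pow (by omega)]
  rcases Nat.even_or_odd r with hev | hodd
  · rw [if_neg (by rintro rfl; simp at hev), if_pos hev]
    ring
  · rw [if_neg (Nat.not_even_iff_odd.2 hodd)]
    rcases eq_or_ne r 1 with rfl | hr1
    · rw [if_pos rfl, Nat.choose_one_right, Nat.choose_one_right, _root_.bernoulli_one]
      push_cast
      ring
    · rw [if_neg hr1, bernoulli_eq_zero_of_odd hodd (lt_of_le_of_ne hodd.pos hr1.symm)]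
      ring

lemma neg_one_pow_mul_bernoulli_add {j m : ℕ} (h : j + m ≠ 1) :
    (-1) ^ j * bernoulli (j + m) = (-1) ^ m * bernoulli (j + m) := by
  have h' : (-1) ^ (j + m) * bernoulli (j + m) = bernoulli (j + m) := by
    rw [← bernoulli'_eq_bernoulli, bernoulli_eq_bernoulli'_of_ne_one h]
  calc (-1) ^ j * bernoulli (j + m) = (-1) ^ j * ((-1) ^ (j + m) * bernoulli (j + m)) := by
        rw [h']
    _ = ((-1) ^ j * (-1) ^ j) * (-1) ^ m * bernoulli (j + m) := by ring
    _ = (-1) ^ m * bernoulli (j + m) := by rw [← mul_pow, neg_one_mul, neg_neg, one_pow, one_mul]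

lemma sum_coeff_taylor_one_bernoulli_mul_sub {a b m : ℕ} (ha : 0 < a) (hb : 0 < b) (hm : m ≠ 0) :
    ∑ j ∈ range (a + b + 1), (-1) ^ j * (m ! * j ! / (m + j + 1)! : ℚ) *
        (taylor 1 (Polynomial.bernoulli a * Polynomial.bernoulli b) -
          Polynomial.bernoulli a * Polynomial.bernoulli b).coeff j * bernoulli (m + j + 1) =
      (-1) ^ (m + 1) * m ! * ∑ k ∈ range ((a + b - 1) / 2 + 1),
        (a * b.choose (2 * k) + b * a.choose (2 * k)) *
          ((a + b - 2 * k - 1)! / (a + b + m - 2 * k)! : ℚ) *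
            bernoulli (2 * k) * bernoulli (a + b + m - 2 * k) := by
  rw [sum_range_succ, coeff_taylor_sub_self_of_natDegree_le _ (natDegree_bernoulli_mul_le a b),
    mul_zero, zero_mul, add_zero, ← sum_range_reflect]
  rw [sum_congr rfl fun r hr => by
    rw [coeff_taylor_one_bernoulli_mul_sub ha hb (mem_range.1 hr), mul_ite, ite_mul, mul_zero,
      zero_mul]]
  rw [sum_range_ite_even, show (a + b + 1) / 2 = (a + b - 1) / 2 + 1 by omega, mul_sum]
  refine sum_congr rfl fun k hk => ?_
  have h2k : 2 * k ≤ a + b - 1 := by have := mem_range.1 hk; omega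
  rw [show m + (a + b - 1 - 2 * k) + 1 = (a + b - 1 - 2 * k) + (m + 1) by omega,
    show a + b + m - 2 * k = (a + b - 1 - 2 * k) + (m + 1) by omega,
    show a + b - 2 * k - 1 = a + b - 1 - 2 * k by omega]
  have hsign := neg_one_pow_mul_bernoulli_add (j := a + b - 1 - 2 * k) (m := m + 1) (by omega)
  linear_combination (m ! * ((a + b - 1 - 2 * k)! / ((a + b - 1 - 2 * k) + (m + 1))! : ℚ) *
    (a * b.choose (2 * k) + b * a.choose (2 * k)) * bernoulli (2 * k)) * hsign

theorem integral_triple_bernoulli_general (n1 n2 n3 : ℕ) (h1 : 0 < n1) (h2 : 0 < n2) (h3 : 0 < n3) :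
    (∫ q in (0:ℝ)..1,
        (Polynomial.aeval q (Polynomial.bernoulli n1))
          * (Polynomial.aeval q (Polynomial.bernoulli n2))
          * (Polynomial.aeval q (Polynomial.bernoulli n3)))
      = (-1) ^ (n3 + 1) * (Nat.factorial n3 : ℝ)
          * ∑ k ∈ Finset.range ((n1 + n2 - 1) / 2 + 1),
              ((n1 : ℝ) * (Nat.choose n2 (2 * k) : ℝ) + (n2 : ℝ) * (Nat.choose n1 (2 * k) : ℝ))
                * ((Nat.factorial (n1 + n2 - 2 * k - 1) : ℝ)
                    / (Nat.factorial (n1 + n2 + n3 - 2 * k) : ℝ))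
                * ((bernoulli (2 * k) : ℚ) : ℝ)
                * ((bernoulli (n1 + n2 + n3 - 2 * k) : ℚ) : ℝ) := by
  have h := integral_aeval_mul_bernoulli_eq_sum _ (natDegree_bernoulli_mul_le n1 n2) h3.ne'
  simp only [map_mul] at h
  rw [h, sum_coeff_taylor_one_bernoulli_mul_sub h1 h2 h3.ne']
  push_cast
  rfl

theorem integral_triple_bernoulli (n1 n2 n3 : ℕ) (h1 : 0 < n1) (h2 : 0 < n2) (h3 : 0 < n3)
    (h12 : 2 ≤ n1 + n2) :
    (∫ q in (0:ℝ)..1,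
        (Polynomial.aeval q (Polynomial.bernoulli n1))
          * (Polynomial.aeval q (Polynomial.bernoulli n2))
          * (Polynomial.aeval q (Polynomial.bernoulli n3)))
      = (-1) ^ (n3 + 1) * (Nat.factorial n3 : ℝ)
          * ∑ k ∈ Finset.range ((n1 + n2 - 1) / 2 + 1),
              ((n1 : ℝ) * (Nat.choose n2 (2 * k) : ℝ) + (n2 : ℝ) * (Nat.choose n1 (2 * k) : ℝ))
                * ((Nat.factorial (n1 + n2 - 2 * k - 1) : ℝ)
                    / (Nat.factorial (n1 + n2 + n3 - 2 * k) : ℝ))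
                * ((bernoulli (2 * k) : ℚ) : ℝ)
                * ((bernoulli (n1 + n2 + n3 - 2 * k) : ℚ) : ℝ) :=
  integral_triple_bernoulli_general n1 n2 n3 h1 h2 h3
end

section
/- For positive integers n1, n2, the product of two Bernoulli polynomials satisfies B_{n1}(q) B_{n2}(q) = \sum_{k=0}^{K} [ n1 \binom{n2}{2k} + n2 \binom{n1}{2k} ] \frac{B_{2k}}{n1+n2-2k} B_{n1+n2-2k}(q) + (-1)^{n1+1} \frac{n1! n2!}{(n1+n2)!} B_{n1+n2}, where K = max(\lfloor n1/2 \rfloor, \lfloor n2/2 \rfloor). -/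
/-!
A polynomial over `ℚ` is determined by its derivative and its integral over `[0, 1]`. Since
`∫₀¹ B_k = 0` for `k ≥ 1`, repeated integration by parts gives
`∫₀¹ B_m B_n = (-1)^(m+1) m! n! / (m+n)! B_{m+n}`, which is also the integral of the right-hand
side. Since `B_k' = k B_{k-1}`, both sides satisfy `F(m,n)' = m F(m-1,n) + n F(m,n-1)`, so the
identity follows by induction on `m + n`. For the right-hand side this recursion is the binomial
identity `m C(m-1,j) = (m-j) C(m,j)`, except for the index `2k = m+n-1`, which occurs only when
`min(m,n) = 1` and supplies the constant term `B_n` coming from `B_0 B_n`.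
-/

open Finset

theorem neg_one_pow_mul_bernoulli {n : ℕ} (hn : n ≠ 1) :
    (-1) ^ n * bernoulli n = bernoulli n := by
  rw [← bernoulli'_eq_bernoulli, bernoulli_eq_bernoulli'_of_ne_one hn]

theorem Nat.cast_mul_choose_sub_one (m j : ℕ) :
    (m : ℚ) * (m - 1).choose j = m.choose j * ((m : ℚ) - j) := by
  rcases m with _ | m
  · rcases j with _ | j <;> simp
  · rcases le_or_gt j (m + 1) with hj | hj
    · have h := Nat.choose_mul_succ_eq m j
      rw [← Nat.cast_inj (R := ℚ), Nat.cast_mul, Nat.cast_mul, Nat.cast_sub hj] at h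
      push_cast at h ⊢
      linear_combination h
    · simp [Nat.choose_eq_zero_of_lt hj, Nat.choose_eq_zero_of_lt (by omega : m < j)]

namespace Polynomial

open Nat

noncomputable def integralUnitInterval : ℚ[X] →ₗ[ℚ] ℚ :=
  lsum fun k => ((k : ℚ) + 1)⁻¹ • LinearMap.id

theorem integralUnitInterval_monomial (k : ℕ) (a : ℚ) :
    integralUnitInterval (monomial k a) = a / (k + 1) := by
  simp [integralUnitInterval, div_eq_inv_mul]

theorem integralUnitInterval_C (a : ℚ) : integralUnitInterval (C a) = a := by
  simpa using integralUnitInterval_monomial 0 a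

theorem integralUnitInterval_derivative (p : ℚ[X]) :
    integralUnitInterval (derivative p) = p.eval 1 - p.eval 0 := by
  induction p using Polynomial.induction_on' with
  | add p q hp hq => simp only [map_add, hp, hq, eval_add]; ring
  | monomial k a =>
    rcases k with _ | k
    · simp
    · rw [derivative_monomial, integralUnitInterval_monomial, eval_monomial, eval_monomial,
        one_pow, zero_pow k.succ_ne_zero, mul_one, mul_zero, sub_zero, add_tsub_cancel_right,
        cast_add_one]
      field_simp

theorem eq_of_derivative_eq_of_integralUnitInterval_eq {p q : ℚ[X]}
    (hd : derivative p = derivative q) (hi : integralUnitInterval p = integralUnitInterval q) :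
    p = q := by
  have hc := eq_C_of_derivative_eq_zero (p := p - q) (by rw [derivative_sub, hd, sub_self])
  have h0 : (p - q).coeff 0 = 0 := by
    rw [← integralUnitInterval_C ((p - q).coeff 0), ← hc, map_sub, hi, sub_self]
  rwa [h0, C_0, sub_eq_zero] at hc

theorem derivative_bernoulli_add_one_eq_smul (k : ℕ) :
    derivative (bernoulli (k + 1)) = ((k : ℚ) + 1) • bernoulli k := by
  rw [derivative_bernoulli_add_one, smul_eq_C_mul]
  simp

theorem integralUnitInterval_bernoulli {n : ℕ} (hn : n ≠ 0) :
    integralUnitInterval (bernoulli n) = 0 := by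
  have h := integralUnitInterval_derivative (bernoulli (n + 1))
  rw [derivative_bernoulli_add_one_eq_smul, map_smul, bernoulli_eval_one, bernoulli_eval_zero,
    bernoulli_eq_bernoulli'_of_ne_one (by omega), sub_self, smul_eq_zero] at h
  exact h.resolve_left (by positivity)

theorem integralUnitInterval_bernoulli_mul_bernoulli_by_parts (a b : ℕ) :
    ((a : ℚ) + 1) * integralUnitInterval (bernoulli a * bernoulli (b + 1))
      + ((b : ℚ) + 1) * integralUnitInterval (bernoulli (a + 1) * bernoulli b)
      = bernoulli' (a + 1) * bernoulli' (b + 1)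
        - _root_.bernoulli (a + 1) * _root_.bernoulli (b + 1) := by
  have h := integralUnitInterval_derivative (bernoulli (a + 1) * bernoulli (b + 1))
  rw [derivative_mul, derivative_bernoulli_add_one_eq_smul, derivative_bernoulli_add_one_eq_smul,
    smul_mul_assoc, mul_smul_comm, map_add, map_smul, map_smul] at h
  simpa [bernoulli_eval_one, bernoulli_eval_zero, add_comm (_ • _)] using h

noncomputable def bernoulliMulConst (m n : ℕ) : ℚ :=
  (-1) ^ (m + 1) * (m ! * n ! / (m + n)!) * _root_.bernoulli (m + n)

theorem bernoulliMulConst_add_one (m n : ℕ) :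
    ((m : ℚ) + 1) * bernoulliMulConst m (n + 1) + ((n : ℚ) + 1) * bernoulliMulConst (m + 1) n
      = 0 := by
  simp only [bernoulliMulConst, factorial_succ, show m + (n + 1) = m + 1 + n by omega]
  push_cast
  field_simp
  ring

theorem integralUnitInterval_bernoulli_mul_bernoulli {a b : ℕ} (ha : a ≠ 0) (hb : b ≠ 0) :
    integralUnitInterval (bernoulli a * bernoulli b) = bernoulliMulConst a b := by
  induction b, Nat.one_le_iff_ne_zero.2 hb using Nat.le_induction generalizing a with
  | base =>
    have h := integralUnitInterval_bernoulli_mul_bernoulli_by_parts a 0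
    rw [bernoulli_zero, mul_one, integralUnitInterval_bernoulli (by omega),
      ← bernoulli_eq_bernoulli'_of_ne_one (n := a + 1) (by omega), bernoulli'_one,
      _root_.bernoulli_one] at h
    have hc := bernoulliMulConst_add_one a 0
    have hconst : bernoulliMulConst (a + 1) 0 = -_root_.bernoulli (a + 1) := by
      rw [bernoulliMulConst, add_zero, factorial_zero, cast_one, mul_one,
        div_self (by positivity), mul_one, pow_succ, mul_neg_one, neg_mul,
        neg_one_pow_mul_bernoulli (by omega)]
    have : (a : ℚ) + 1 ≠ 0 := by positivity
    exact mul_left_cancel₀ this (by linear_combination h - hc + hconst)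
  | succ b hb1 ih =>
    have h := integralUnitInterval_bernoulli_mul_bernoulli_by_parts a b
    rw [← bernoulli_eq_bernoulli'_of_ne_one (by omega),
      ← bernoulli_eq_bernoulli'_of_ne_one (by omega), sub_self, ih (by omega) (by omega)] at h
    have hc := bernoulliMulConst_add_one a b
    have : (a : ℚ) + 1 ≠ 0 := by positivity
    exact mul_left_cancel₀ this (by linear_combination h - hc)

theorem derivative_bernoulli_mul_bernoulli (m n : ℕ) :
    derivative (bernoulli m * bernoulli n)
      = (m : ℚ) • (bernoulli (m - 1) * bernoulli n)
        + (n : ℚ) • (bernoulli m * bernoulli (n - 1)) := by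
  rw [derivative_mul, derivative_bernoulli, derivative_bernoulli, smul_eq_C_mul, smul_eq_C_mul,
    C_eq_natCast, C_eq_natCast]
  ring

noncomputable def bernoulliMulWeight (m n k : ℕ) : ℚ :=
  (m * n.choose (2 * k) + n * m.choose (2 * k)) * _root_.bernoulli (2 * k)

noncomputable def bernoulliMulCoeff (m n k : ℕ) : ℚ :=
  bernoulliMulWeight m n k / (m + n - 2 * k : ℕ)

noncomputable def bernoulliMulExpansion (m n : ℕ) : ℚ[X] :=
  ∑ k ∈ range (max (m / 2) (n / 2) + 1), bernoulliMulCoeff m n k • bernoulli (m + n - 2 * k)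
    + C (bernoulliMulConst m n)

theorem bernoulliMulCoeff_eq_zero {m n k : ℕ} (hm : m < 2 * k) (hn : n < 2 * k) :
    bernoulliMulCoeff m n k = 0 := by
  simp [bernoulliMulCoeff, bernoulliMulWeight, choose_eq_zero_of_lt hm, choose_eq_zero_of_lt hn]

theorem bernoulliMulExpansion_eq_sum_range {m n N : ℕ} (hN : max (m / 2) (n / 2) < N) :
    bernoulliMulExpansion m n
      = ∑ k ∈ range N, bernoulliMulCoeff m n k • bernoulli (m + n - 2 * k)
        + C (bernoulliMulConst m n) := by
  rw [bernoulliMulExpansion, sum_subset (range_subset_range.2 hN)]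
  intro k hkN hk
  simp only [mem_range] at hkN hk
  rw [bernoulliMulCoeff_eq_zero (by omega) (by omega), zero_smul]

theorem bernoulliMulConst_comm {m n : ℕ} (h : m + n ≠ 1) :
    bernoulliMulConst m n = bernoulliMulConst n m := by
  have hpow : ((-1 : ℚ) ^ (m + 1)) * (-1) ^ (m + n) = (-1) ^ (n + 1) := by
    rw [← pow_add, show m + 1 + (m + n) = 2 * m + (n + 1) by ring, pow_add, pow_mul]
    simp
  rw [bernoulliMulConst, bernoulliMulConst, ← neg_one_pow_mul_bernoulli h, add_comm n m, ← hpow]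
  ring

theorem bernoulliMulExpansion_comm {m n : ℕ} (h : m + n ≠ 1) :
    bernoulliMulExpansion m n = bernoulliMulExpansion n m := by
  have hcoeff (k : ℕ) : bernoulliMulCoeff m n k = bernoulliMulCoeff n m k := by
    rw [bernoulliMulCoeff, bernoulliMulCoeff, bernoulliMulWeight, bernoulliMulWeight, add_comm m n]
    ring
  simp only [bernoulliMulExpansion, max_comm (m / 2), hcoeff, add_comm m n,
    bernoulliMulConst_comm h]

theorem integralUnitInterval_bernoulliMulExpansion {m n : ℕ} (hm : m ≠ 0) (hn : n ≠ 0) :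
    integralUnitInterval (bernoulliMulExpansion m n) = bernoulliMulConst m n := by
  rw [bernoulliMulExpansion, map_add, integralUnitInterval_C, map_sum, add_eq_right]
  refine sum_eq_zero fun k hk => ?_
  rw [mem_range] at hk
  rw [map_smul, integralUnitInterval_bernoulli (by omega), smul_zero]

theorem derivative_bernoulliMulExpansion {m n : ℕ} (hm : m ≠ 0) (hn : n ≠ 0) :
    derivative (bernoulliMulExpansion m n)
      = ∑ k ∈ range (max (m / 2) (n / 2) + 1),
          bernoulliMulWeight m n k • bernoulli (m + n - 2 * k - 1) := by
  rw [bernoulliMulExpansion, derivative_add, derivative_C, add_zero, derivative_sum]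
  refine sum_congr rfl fun k hk => ?_
  rw [mem_range] at hk
  have hpos : ((m + n - 2 * k : ℕ) : ℚ) ≠ 0 := by norm_cast; omega
  rw [derivative_smul, derivative_bernoulli, ← C_eq_natCast, ← smul_eq_C_mul, smul_smul,
    bernoulliMulCoeff, div_mul_cancel₀ _ hpos]

theorem bernoulliMulCoeff_pred {m n k : ℕ} (hm : m ≠ 0) (hn : n ≠ 0)
    (hk : 2 * k + 1 < m + n) :
    (m : ℚ) * bernoulliMulCoeff (m - 1) n k + n * bernoulliMulCoeff m (n - 1) k
      = bernoulliMulWeight m n k := by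
  have hd₁ : ((m - 1 + n - 2 * k : ℕ) : ℚ) = m + n - 1 - 2 * k := by
    rw [cast_sub (by omega), cast_add, cast_sub (by omega)]; push_cast; ring
  have hd₂ : ((m + (n - 1) - 2 * k : ℕ) : ℚ) = m + n - 1 - 2 * k := by
    rw [cast_sub (by omega), cast_add, cast_sub (by omega)]; push_cast; ring
  have hd : (m + n - 1 - 2 * k : ℚ) ≠ 0 := by
    rw [← hd₁]; norm_cast; omega
  have hchoose_m := Nat.cast_mul_choose_sub_one m (2 * k)
  have hchoose_n := Nat.cast_mul_choose_sub_one n (2 * k)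
  rw [bernoulliMulCoeff, bernoulliMulCoeff, hd₁, hd₂, bernoulliMulWeight, bernoulliMulWeight,
    bernoulliMulWeight, cast_sub (by omega), cast_sub (by omega)]
  field_simp
  push_cast at hchoose_m hchoose_n ⊢
  linear_combination (↑n * hchoose_m + ↑m * hchoose_n) * _root_.bernoulli (2 * k)

theorem derivative_bernoulliMulExpansion_eq_smul_add {m n : ℕ} (hm : m ≠ 0) (hn : n ≠ 0) :
    derivative (bernoulliMulExpansion m n)
      = (m : ℚ) • bernoulliMulExpansion (m - 1) n
        + (n : ℚ) • bernoulliMulExpansion m (n - 1)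
        + ∑ k ∈ range (max (m / 2) (n / 2) + 1),
            if 2 * k + 1 = m + n then C (bernoulliMulWeight m n k) else 0 := by
  have hconst : (m : ℚ) * bernoulliMulConst (m - 1) n + n * bernoulliMulConst m (n - 1) = 0 := by
    obtain ⟨a, rfl⟩ := exists_eq_add_one_of_ne_zero hm
    obtain ⟨b, rfl⟩ := exists_eq_add_one_of_ne_zero hn
    simpa using bernoulliMulConst_add_one a b
  rw [derivative_bernoulliMulExpansion hm hn,
    bernoulliMulExpansion_eq_sum_range (m := m - 1) (N := max (m / 2) (n / 2) + 1) (by omega),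
    bernoulliMulExpansion_eq_sum_range (n := n - 1) (N := max (m / 2) (n / 2) + 1) (by omega),
    smul_add, smul_add, add_add_add_comm, smul_C, smul_C, smul_eq_mul, smul_eq_mul, ← C_add,
    hconst, C_0, add_zero, smul_sum, smul_sum, ← sum_add_distrib, ← sum_add_distrib]
  refine sum_congr rfl fun k hk => ?_
  rw [mem_range] at hk
  rw [smul_smul, smul_smul, show m - 1 + n - 2 * k = m + n - 2 * k - 1 by omega,
    show m + (n - 1) - 2 * k = m + n - 2 * k - 1 by omega, ← add_smul]
  rcases (by omega : 2 * k + 1 < m + n ∨ 2 * k + 1 = m + n) with h | h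
  · rw [bernoulliMulCoeff_pred hm hn h, if_neg h.ne, add_zero]
  · -- the denominators `m + n - 1 - 2 * k` vanish, so both coefficients are junk zeros
    rw [if_pos h, bernoulliMulCoeff, bernoulliMulCoeff, show m - 1 + n - 2 * k = 0 by omega,
      show m + (n - 1) - 2 * k = 0 by omega, show m + n - 2 * k - 1 = 0 by omega, cast_zero,
      div_zero, div_zero, mul_zero, mul_zero, add_zero, zero_smul, zero_add, bernoulli_zero,
      smul_eq_C_mul, mul_one]

theorem derivative_bernoulliMulExpansion_of_two_le {m n : ℕ} (hm : 2 ≤ m) (hn : 2 ≤ n) :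
    derivative (bernoulliMulExpansion m n)
      = (m : ℚ) • bernoulliMulExpansion (m - 1) n
        + (n : ℚ) • bernoulliMulExpansion m (n - 1) := by
  rw [derivative_bernoulliMulExpansion_eq_smul_add (by omega) (by omega), add_eq_left]
  refine sum_eq_zero fun k hk => if_neg ?_
  rw [mem_range] at hk
  omega

theorem bernoulliMulExpansion_zero_left {n : ℕ} (hn : n ≠ 0) :
    bernoulliMulExpansion 0 n = bernoulli n - C (_root_.bernoulli n) := by
  rw [bernoulliMulExpansion, sum_eq_single 0]
  · simp [bernoulliMulCoeff, bernoulliMulWeight, bernoulliMulConst, hn, sub_eq_add_neg,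
      factorial_ne_zero]
  · intro k _ hk
    simp [bernoulliMulCoeff, bernoulliMulWeight, choose_eq_zero_of_lt (by omega : 0 < 2 * k)]
  · simp

theorem derivative_bernoulliMulExpansion_one {n : ℕ} (hn : 2 ≤ n) :
    derivative (bernoulliMulExpansion 1 n)
      = bernoulli n + (n : ℚ) • bernoulliMulExpansion 1 (n - 1) := by
  have htop : ∑ k ∈ range (max (1 / 2) (n / 2) + 1),
      (if 2 * k + 1 = 1 + n then C (bernoulliMulWeight 1 n k) else 0) = C (_root_.bernoulli n) := by
    obtain ⟨t, rfl | rfl⟩ := even_or_odd' n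
    · rw [sum_eq_single t, if_pos (by omega)]
      · simp [bernoulliMulWeight, choose_eq_zero_of_lt (by omega : 1 < 2 * t)]
      · intro k _ hk
        rw [if_neg (by omega)]
      · simp
    · rw [bernoulli_eq_zero_of_odd (odd_two_mul_add_one t) (by omega), C_0]
      exact sum_eq_zero fun k _ => if_neg (by omega)
  rw [derivative_bernoulliMulExpansion_eq_smul_add one_ne_zero (by omega), htop, Nat.sub_self,
    bernoulliMulExpansion_zero_left (by omega), cast_one, one_smul]
  abel

theorem bernoulli_mul_bernoulli {m n : ℕ} (hm : m ≠ 0) (hn : n ≠ 0) :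
    bernoulli m * bernoulli n = bernoulliMulExpansion m n := by
  induction h : m + n using Nat.strong_induction_on generalizing m n with
  | _ s ih =>
  wlog hmn : m ≤ n generalizing m n
  · rw [mul_comm, this hn hm (by omega) (by omega), bernoulliMulExpansion_comm (by omega)]
  refine eq_of_derivative_eq_of_integralUnitInterval_eq ?_ (by
    rw [integralUnitInterval_bernoulli_mul_bernoulli hm hn,
      integralUnitInterval_bernoulliMulExpansion hm hn])
  rw [derivative_bernoulli_mul_bernoulli]
  rcases (by omega : m = 1 ∧ n = 1 ∨ m = 1 ∧ 2 ≤ n ∨ 2 ≤ m) with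
    ⟨rfl, rfl⟩ | ⟨rfl, hn2⟩ | hm2
  · rw [derivative_bernoulliMulExpansion one_ne_zero one_ne_zero]
    simp [bernoulliMulWeight, add_smul]
  · rw [ih _ (by omega) one_ne_zero (by omega) rfl, derivative_bernoulliMulExpansion_one hn2]
    simp
  · rw [ih _ (by omega) (by omega) hn rfl, ih _ (by omega) hm (by omega) rfl,
      derivative_bernoulliMulExpansion_of_two_le hm2 (by omega)]

end Polynomial

theorem bernoulli_poly_product (n1 n2 : ℕ) (h1 : 0 < n1) (h2 : 0 < n2) (q : ℝ) :
    (Polynomial.aeval q (Polynomial.bernoulli n1))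
        * (Polynomial.aeval q (Polynomial.bernoulli n2))
      = (∑ k ∈ Finset.range (max (n1 / 2) (n2 / 2) + 1),
            ((n1 : ℝ) * (Nat.choose n2 (2 * k) : ℝ) + (n2 : ℝ) * (Nat.choose n1 (2 * k) : ℝ))
              * (((bernoulli (2 * k) : ℚ) : ℝ) / ((n1 + n2 - 2 * k : ℕ) : ℝ))
              * (Polynomial.aeval q (Polynomial.bernoulli (n1 + n2 - 2 * k))))
        + (-1) ^ (n1 + 1) * ((Nat.factorial n1 : ℝ) * (Nat.factorial n2 : ℝ)
            / (Nat.factorial (n1 + n2) : ℝ)) * ((bernoulli (n1 + n2) : ℚ) : ℝ) := by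
  rw [← map_mul, Polynomial.bernoulli_mul_bernoulli h1.ne' h2.ne',
    Polynomial.bernoulliMulExpansion, map_add, map_sum, Polynomial.aeval_C, eq_ratCast]
  congr 1
  · refine sum_congr rfl fun k _ => ?_
    rw [map_smul, Rat.smul_def, Polynomial.bernoulliMulCoeff, Polynomial.bernoulliMulWeight]
    push_cast
    ring
  · simp [Polynomial.bernoulliMulConst]
end

section
/- For Re a > 1 and Re b > 1, \int_0^1 \zeta(1-a,q) \zeta(1-b,q) dq = \frac{2 \Gamma(a)\Gamma(b)}{(2\pi)^{a+b}} \zeta(a+b) \cos(\frac{\pi}{2}(a-b)). -/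
/-!
For `1 < Re s` the functional equation writes `ζ(1 - s, q)` as
`(2π)^(-s) Γ(s) (e^(-πis/2) F(q, s) + e^(πis/2) F(-q, s))` with
`F(q, s) = ∑ₙ e^(2πinq) / n^s`, an absolutely convergent trigonometric series. Integrating
products termwise over `[0, 1]` keeps only the frequency-zero terms: `F(q, a) F(q, b)` has none
(`n + m = 0` forces `n = m = 0`), while `F(q, a) F(-q, b)` keeps the diagonal `n = m` and
integrates to `ζ(a + b)`. The two cross terms thus give
`(e^(-πi(a-b)/2) + e^(πi(a-b)/2)) ζ(a + b) = 2 cos(π(a - b)/2) ζ(a + b)`.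
-/

open HurwitzZeta Complex Real

lemma integral_cexp_two_pi_I_int_mul (k : ℤ) :
    ∫ q in (0 : ℝ)..1, cexp (2 * π * I * k * q) = if k = 0 then 1 else 0 := by
  split_ifs with hk
  · simp [hk]
  · have hc : 2 * π * I * k ≠ 0 := by simp [hk, pi_ne_zero]
    rw [integral_exp_mul_complex hc, ofReal_one, mul_one,
      show 2 * π * I * k = k * (2 * π * I) by ring, exp_int_mul_two_pi_mul_I]
    simp

lemma integral_tsum_mul_cexp_two_pi_I_int_mul {ι : Type*} [Countable ι] {c : ι → ℂ}
    (hc : Summable fun i ↦ ‖c i‖) (k : ι → ℤ) :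
    ∫ q in (0 : ℝ)..1, ∑' i, c i * cexp (2 * π * I * k i * q) =
      ∑' i, if k i = 0 then c i else 0 := by
  let f (i : ι) : C(ℝ, ℂ) := ⟨fun q ↦ c i * cexp (2 * π * I * k i * q), by fun_prop⟩
  have hf : Summable fun i ↦
      ‖(f i).restrict (⟨Set.uIcc 0 1, isCompact_uIcc⟩ : TopologicalSpace.Compacts ℝ)‖ := by
    refine hc.of_nonneg_of_le (fun _ ↦ norm_nonneg _) fun i ↦
      (ContinuousMap.norm_le _ (norm_nonneg _)).2 fun x ↦ ?_
    simp [f, norm_exp]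
  refine (intervalIntegral.tsum_intervalIntegral_eq_of_summable_norm hf).symm.trans ?_
  simp [f, integral_cexp_two_pi_I_int_mul]

lemma UnitAddCircle.intervalIntegral_comp_neg {E : Type*} [NormedAddCommGroup E] [NormedSpace ℝ E]
    (f : UnitAddCircle → E) : ∫ q in (0 : ℝ)..1, f (-q) = ∫ q in (0 : ℝ)..1, f q := by
  have hper : Function.Periodic (fun q : ℝ ↦ f q) 1 := fun q ↦ by simp
  simp_rw [← AddCircle.coe_neg]
  rw [intervalIntegral.integral_comp_neg (fun q ↦ f q)]
  simpa using hper.intervalIntegral_add_eq (-1) 0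

lemma summable_norm_one_div_natCast_cpow {s : ℂ} (hs : 1 < s.re) :
    Summable fun n : ℕ ↦ ‖1 / (n : ℂ) ^ s‖ :=
  summable_norm_iff.2 (summable_one_div_nat_cpow.2 hs)

lemma norm_cexp_two_pi_I_mul_div_natCast_cpow (x : ℝ) (n : ℕ) (s : ℂ) :
    ‖cexp (2 * π * I * x * n) / (n : ℂ) ^ s‖ = ‖1 / (n : ℂ) ^ s‖ := by
  simp [norm_exp]

lemma summable_norm_expZeta_term {s : ℂ} (hs : 1 < s.re) (x : ℝ) :
    Summable fun n : ℕ ↦ ‖cexp (2 * π * I * x * n) / (n : ℂ) ^ s‖ := by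
  simpa only [norm_cexp_two_pi_I_mul_div_natCast_cpow] using summable_norm_one_div_natCast_cpow hs

lemma continuous_expZeta_ofReal {s : ℂ} (hs : 1 < s.re) : Continuous fun x : ℝ ↦ expZeta x s := by
  simp_rw [← fun x : ℝ ↦ (hasSum_expZeta_of_one_lt_re x hs).tsum_eq]
  exact continuous_tsum (fun n ↦ by fun_prop) (summable_norm_one_div_natCast_cpow hs)
    fun n x ↦ (norm_cexp_two_pi_I_mul_div_natCast_cpow x n s).le

lemma hurwitzZeta_one_sub_of_one_lt_re {s : ℂ} (hs : 1 < s.re) (x : UnitAddCircle) :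
    hurwitzZeta x (1 - s) = (2 * π) ^ (-s) * Gamma s *
      (cexp (-π * I * s / 2) * expZeta x s + cexp (π * I * s / 2) * expZeta (-x) s) :=
  hurwitzZeta_one_sub x (fun n h ↦ by simp [h] at hs; linarith) (Or.inr fun h ↦ by simp [h] at hs)

section

variable {a b : ℂ}

lemma expZeta_mul_expZeta_int_mul_eq_tsum (ha : 1 < a.re) (hb : 1 < b.re) (k : ℤ) (q : ℝ) :
    expZeta q a * expZeta (k * q : ℝ) b = ∑' p : ℕ × ℕ,
      1 / (p.1 : ℂ) ^ a * (1 / (p.2 : ℂ) ^ b) * cexp (2 * π * I * (p.1 + k * p.2 : ℤ) * q) := by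
  rw [← (hasSum_expZeta_of_one_lt_re q ha).tsum_eq, ← (hasSum_expZeta_of_one_lt_re _ hb).tsum_eq,
    tsum_mul_tsum_of_summable_norm (summable_norm_expZeta_term ha _)
      (summable_norm_expZeta_term hb _)]
  congr 1 with p
  rw [div_mul_div_comm, div_mul_div_comm, one_mul, ← Complex.exp_add, one_div_mul_eq_div]
  push_cast
  ring_nf

lemma integral_expZeta_mul_expZeta_int_mul (ha : 1 < a.re) (hb : 1 < b.re) (k : ℤ) :
    ∫ q in (0 : ℝ)..1, expZeta q a * expZeta (k * q : ℝ) b = ∑' p : ℕ × ℕ,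
      if (p.1 + k * p.2 : ℤ) = 0 then 1 / (p.1 : ℂ) ^ a * (1 / (p.2 : ℂ) ^ b) else 0 := by
  simp_rw [expZeta_mul_expZeta_int_mul_eq_tsum ha hb k]
  exact integral_tsum_mul_cexp_two_pi_I_int_mul
    ((summable_norm_one_div_natCast_cpow ha).mul_norm (summable_norm_one_div_natCast_cpow hb)) _

lemma integral_expZeta_mul_expZeta (ha : 1 < a.re) (hb : 1 < b.re) :
    ∫ q in (0 : ℝ)..1, expZeta q a * expZeta q b = 0 := by
  have h := integral_expZeta_mul_expZeta_int_mul ha hb 1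
  simp only [Int.cast_one, one_mul] at h
  refine h.trans <| (tsum_congr fun p ↦ ?_).trans tsum_zero
  split_ifs with hp
  · obtain ⟨h1, -⟩ : p.1 = 0 ∧ p.2 = 0 := by omega
    simp [h1, zero_cpow (ne_zero_of_one_lt_re ha)]
  · rfl

lemma integral_expZeta_mul_expZeta_neg (ha : 1 < a.re) (hb : 1 < b.re) :
    ∫ q in (0 : ℝ)..1, expZeta q a * expZeta (-q) b = riemannZeta (a + b) := by
  have h := integral_expZeta_mul_expZeta_int_mul ha hb (-1)
  simp only [Int.cast_neg, Int.cast_one, neg_one_mul, AddCircle.coe_neg] at h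
  have hab : 1 < (a + b).re := by rw [add_re]; linarith
  rw [h, zeta_eq_tsum_one_div_nat_cpow hab]
  have hdiag : Function.Injective fun n : ℕ ↦ (n, n) := fun m n h ↦ congrArg Prod.fst h
  rw [← hdiag.tsum_eq fun p hp ↦
    ⟨p.1, Prod.ext rfl (by have := (ite_ne_right_iff.1 hp).1; change p.1 = p.2; omega)⟩]
  congr 1 with n
  rcases eq_or_ne n 0 with rfl | hn
  · simp [zero_cpow (ne_zero_of_one_lt_re ha), zero_cpow (ne_zero_of_one_lt_re hab)]
  · simp [cpow_add _ _ (Nat.cast_ne_zero.2 hn), mul_comm]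

lemma integral_expZeta_combination_mul (ha : 1 < a.re) (hb : 1 < b.re) (u v u' v' : ℂ) :
    ∫ q in (0 : ℝ)..1, (u * expZeta q a + v * expZeta (-q) a) *
      (u' * expZeta q b + v' * expZeta (-q) b) = (u * v' + v * u') * riemannZeta (a + b) := by
  have hcont {s : ℂ} (hs : 1 < s.re) : Continuous fun q : ℝ ↦ expZeta (-q) s := by
    simpa only [Function.comp_def, AddCircle.coe_neg] using
      (continuous_expZeta_ofReal hs).comp continuous_neg
  have ha₁ := continuous_expZeta_ofReal ha
  have hb₁ := continuous_expZeta_ofReal hb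
  have ha₂ := hcont ha
  have hb₂ := hcont hb
  have hPP : ∫ q in (0 : ℝ)..1, expZeta (-q) a * expZeta (-q) b = 0 :=
    (UnitAddCircle.intervalIntegral_comp_neg fun x ↦ expZeta x a * expZeta x b).trans
      (integral_expZeta_mul_expZeta ha hb)
  have hPQ : ∫ q in (0 : ℝ)..1, expZeta (-q) a * expZeta q b = riemannZeta (a + b) := by
    simpa only [neg_neg] using
      (UnitAddCircle.intervalIntegral_comp_neg fun x ↦ expZeta x a * expZeta (-x) b).trans
        (integral_expZeta_mul_expZeta_neg ha hb)
  calc _ = ∫ q in (0 : ℝ)..1, (u * u') * (expZeta q a * expZeta q b) +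
          (u * v') * (expZeta q a * expZeta (-q) b) + (v * u') * (expZeta (-q) a * expZeta q b) +
          (v * v') * (expZeta (-q) a * expZeta (-q) b) := by
        congr 1 with q; ring
    _ = _ := by
        rw [intervalIntegral.integral_add, intervalIntegral.integral_add,
          intervalIntegral.integral_add]
        · simp only [intervalIntegral.integral_const_mul, integral_expZeta_mul_expZeta ha hb,
            integral_expZeta_mul_expZeta_neg ha hb, hPP, hPQ]
          ring
        all_goals exact Continuous.intervalIntegrable (by fun_prop) _ _

end

theorem integral_hurwitzZeta_hurwitzZeta (a b : ℂ) (ha : 1 < a.re) (hb : 1 < b.re) :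
    (∫ q in (0:ℝ)..1, hurwitzZeta (↑q) (1 - a) * hurwitzZeta (↑q) (1 - b))
      = 2 * Complex.Gamma a * Complex.Gamma b / (2 * Real.pi : ℂ) ^ (a + b)
          * riemannZeta (a + b) * Complex.cos ((Real.pi : ℂ) / 2 * (a - b)) := by
  simp_rw [hurwitzZeta_one_sub_of_one_lt_re ha, hurwitzZeta_one_sub_of_one_lt_re hb,
    mul_mul_mul_comm _ (_ + _), intervalIntegral.integral_const_mul,
    integral_expZeta_combination_mul ha hb]
  have hexp : cexp (-π * I * a / 2) * cexp (π * I * b / 2) +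
      cexp (π * I * a / 2) * cexp (-π * I * b / 2) = 2 * Complex.cos (π / 2 * (a - b)) := by
    rw [Complex.cos, ← Complex.exp_add, ← Complex.exp_add]
    ring_nf
  rw [hexp, cpow_add _ _ (by simp [pi_ne_zero]), cpow_neg, cpow_neg]
  ring
end

section
/- For Re a > 1 and Re b > 1, \int_0^1 \zeta(1-a,q) \zeta(1-b,1-q) dq = \frac{2 \Gamma(a)\Gamma(b)}{(2\pi)^{a+b}} \zeta(a+b) \cos(\frac{\pi}{2}(a+b)). -/
open HurwitzZeta Complex MeasureTheory Set
open scoped Real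

namespace IntHZaux

lemma norm_term (s : ℂ) (x : ℝ) (n : ℕ) :
    ‖cexp (2 * π * I * x * n) / (n : ℂ) ^ s‖ = ‖((n : ℂ) ^ s)⁻¹‖ := by
  rw [div_eq_mul_inv, norm_mul]
  have h : (2 * (π:ℂ) * I * x * n) = ((2 * π * x * n : ℝ) : ℂ) * I := by push_cast; ring
  rw [h, Complex.norm_exp_ofReal_mul_I, one_mul]

lemma summable_inv_cpow {s : ℂ} (hs : 1 < s.re) :
    Summable fun n : ℕ => ‖((n : ℂ) ^ s)⁻¹‖ := by
  rw [summable_norm_iff]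
  simpa only [one_div] using Complex.summable_one_div_nat_cpow.mpr hs

lemma continuous_expZeta_line (s : ℂ) (hs : 1 < s.re) (u : ℝ) :
    Continuous fun q : ℝ => expZeta ((u * q : ℝ) : UnitAddCircle) s := by
  have h : (fun q : ℝ => expZeta ((u * q : ℝ) : UnitAddCircle) s)
      = fun q : ℝ => ∑' n : ℕ, cexp (2 * π * I * (u * q : ℝ) * n) / (n : ℂ) ^ s := by
    ext q
    exact ((hasSum_expZeta_of_one_lt_re (u * q) hs).tsum_eq).symm
  rw [h]
  refine continuous_tsum (fun n => ?_) (summable_inv_cpow hs)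
    (fun n q => le_of_eq (norm_term s (u * q) n))
  fun_prop

lemma integral_cexp_int (k : ℤ) :
    (∫ q in (0:ℝ)..1, cexp (2 * π * I * k * q)) = if k = 0 then 1 else 0 := by
  split_ifs with h
  · subst h; simp
  · have hc : (2 * (π:ℂ) * I * k) ≠ 0 := by
      simp [Real.pi_ne_zero, Complex.I_ne_zero, h]
    rw [integral_exp_mul_complex hc]
    have h1 : cexp (2 * (π:ℂ) * I * k * (1:ℝ)) = 1 := by
      push_cast
      rw [mul_one]
      rw [show (2 * (π:ℂ) * I * k) = (k : ℂ) * (2 * π * I) by ring]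
      exact Complex.exp_int_mul_two_pi_mul_I k
    rw [h1]
    simp

set_option maxHeartbeats 2000000 in
lemma key (a b : ℂ) (ha : 1 < a.re) (hb : 1 < b.re) (u v : ℝ)
    (hu : u = 1 ∨ u = -1) (hv : v = 1 ∨ v = -1) :
    (∫ q in (0:ℝ)..1, expZeta ((u * q : ℝ) : UnitAddCircle) a
        * expZeta ((v * q : ℝ) : UnitAddCircle) b)
      = if u + v = 0 then riemannZeta (a + b) else 0 := by
  have ha0 : a ≠ 0 := fun h => by rw [h] at ha; norm_num at ha
  have hb0 : b ≠ 0 := fun h => by rw [h] at hb; norm_num at hb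
  set F : ℕ × ℕ → ℝ → ℂ := fun p q =>
    cexp (2 * π * I * (u * q : ℝ) * p.1) / (p.1 : ℂ) ^ a
      * (cexp (2 * π * I * (v * q : ℝ) * p.2) / (p.2 : ℂ) ^ b) with hF
  -- pointwise identification of the integrand with a double series
  have heq : ∀ q : ℝ, expZeta ((u * q : ℝ) : UnitAddCircle) a
      * expZeta ((v * q : ℝ) : UnitAddCircle) b = ∑' p : ℕ × ℕ, F p q := by
    intro q
    rw [← (hasSum_expZeta_of_one_lt_re (u * q) ha).tsum_eq,
      ← (hasSum_expZeta_of_one_lt_re (v * q) hb).tsum_eq]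
    exact tsum_mul_tsum_of_summable_norm
      (by simpa only [norm_term] using summable_inv_cpow ha)
      (by simpa only [norm_term] using summable_inv_cpow hb)
  rw [intervalIntegral.integral_congr (fun q _ => heq q),
    intervalIntegral.integral_of_le zero_le_one]
  -- swap sum and integral
  have hint : ∀ p : ℕ × ℕ, Integrable (F p) (volume.restrict (Ioc (0:ℝ) 1)) := by
    intro p
    apply Continuous.integrableOn_Ioc
    fun_prop
  have hnormint : ∀ p : ℕ × ℕ, (∫ q in Ioc (0:ℝ) 1, ‖F p q‖)
      = ‖((p.1 : ℂ) ^ a)⁻¹‖ * ‖((p.2 : ℂ) ^ b)⁻¹‖ := by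
    intro p
    have h1 : ∀ q : ℝ, ‖F p q‖ = ‖((p.1 : ℂ) ^ a)⁻¹‖ * ‖((p.2 : ℂ) ^ b)⁻¹‖ := by
      intro q
      rw [hF]
      simp only [norm_mul, norm_term]
    simp only [h1]
    simp [Real.volume_Ioc]
  have hswap : (∫ q in Ioc (0:ℝ) 1, ∑' p : ℕ × ℕ, F p q)
      = ∑' p : ℕ × ℕ, ∫ q in Ioc (0:ℝ) 1, F p q := by
    refine (integral_tsum_of_summable_integral_norm hint ?_).symm
    rw [funext hnormint]
    exact Summable.mul_of_nonneg (summable_inv_cpow ha) (summable_inv_cpow hb)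
      (fun _ => norm_nonneg _) (fun _ => norm_nonneg _)
  rw [hswap]
  -- compute each term
  have hterm : ∀ p : ℕ × ℕ, (∫ q in Ioc (0:ℝ) 1, F p q)
      = (if (u * p.1 + v * p.2 : ℝ) = 0 then 1 else 0)
        * (((p.1 : ℂ) ^ a)⁻¹ * ((p.2 : ℂ) ^ b)⁻¹) := by
    rintro ⟨m, n⟩
    obtain ⟨k, hk⟩ : ∃ k : ℤ, (k : ℝ) = u * m + v * n := by
      rcases hu with rfl | rfl <;> rcases hv with rfl | rfl
      · exact ⟨(m : ℤ) + n, by push_cast; ring⟩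
      · exact ⟨(m : ℤ) - n, by push_cast; ring⟩
      · exact ⟨-(m : ℤ) + n, by push_cast; ring⟩
      · exact ⟨-(m : ℤ) - n, by push_cast; ring⟩
    have hk' : (k : ℂ) = (u : ℂ) * m + (v : ℂ) * n := by
      have := congrArg (fun t : ℝ => (t : ℂ)) hk
      push_cast at this
      exact this
    have hFeq : ∀ q : ℝ, F (m, n) q
        = cexp (2 * π * I * k * q) * (((m : ℂ) ^ a)⁻¹ * ((n : ℂ) ^ b)⁻¹) := by
      intro q
      rw [hF]
      simp only [div_eq_mul_inv]
      rw [mul_mul_mul_comm, ← Complex.exp_add]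
      congr 1
      rw [hk']
      push_cast
      ring
    rw [funext hFeq, ← intervalIntegral.integral_of_le zero_le_one,
      intervalIntegral.integral_mul_const, integral_cexp_int]
    have hiff : k = 0 ↔ (u * m + v * n : ℝ) = 0 := by
      rw [← hk]
      exact_mod_cast Int.cast_eq_zero.symm
    by_cases hk0 : k = 0
    · rw [if_pos hk0, if_pos (hiff.mp hk0), one_mul]
    · rw [if_neg hk0, if_neg (fun h => hk0 (hiff.mpr h)), zero_mul]
  rw [tsum_congr hterm]
  have hu0 : u ≠ 0 := by rcases hu with rfl | rfl <;> norm_num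
  by_cases huv : u + v = 0
  · rw [if_pos huv]
    have hvu : v = -u := by linarith
    have hcond : ∀ p : ℕ × ℕ, ((u * p.1 + v * p.2 : ℝ) = 0) ↔ p.1 = p.2 := by
      rintro ⟨m, n⟩
      subst hvu
      simp only
      constructor
      · intro h
        have : u * ((m : ℝ) - n) = 0 := by linarith
        have := (mul_eq_zero.mp this).resolve_left hu0
        have : (m : ℝ) = n := by linarith
        exact_mod_cast this
      · intro h
        subst h
        ring
    have hdiag : (∑' p : ℕ × ℕ, (if (u * p.1 + v * p.2 : ℝ) = 0 then (1:ℂ) else 0)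
        * (((p.1 : ℂ) ^ a)⁻¹ * ((p.2 : ℂ) ^ b)⁻¹))
        = ∑' n : ℕ, (if (u * n + v * n : ℝ) = 0 then (1:ℂ) else 0)
          * (((n : ℂ) ^ a)⁻¹ * ((n : ℂ) ^ b)⁻¹) := by
      refine (Function.Injective.tsum_eq (g := fun n : ℕ => ((n, n) : ℕ × ℕ))
        (fun x y h => by simpa using congrArg Prod.fst h) ?_).symm
      rintro ⟨m, n⟩ hmem
      rw [Function.mem_support] at hmem
      simp only [ne_eq] at hmem
      have hmn : m = n := by
        by_contra hne
        exact hmem (by rw [if_neg (fun h => hne ((hcond (m, n)).mp h)), zero_mul])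
      exact ⟨m, by rw [hmn]⟩
    rw [hdiag, zeta_eq_tsum_one_div_nat_cpow (by simp only [Complex.add_re]; linarith)]
    refine tsum_congr fun n => ?_
    rw [if_pos ((hcond (n, n)).mpr rfl), one_mul]
    rcases eq_or_ne n 0 with rfl | hn
    · simp [Complex.zero_cpow ha0, Complex.zero_cpow (show a + b ≠ 0 by
        intro h
        have := congrArg Complex.re h
        simp only [Complex.add_re, Complex.zero_re] at this
        linarith)]
    · rw [Complex.cpow_add _ _ (Nat.cast_ne_zero.mpr hn), one_div, mul_inv]
  · rw [if_neg huv]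
    have huv' : u = v := by
      rcases hu with rfl | rfl <;> rcases hv with rfl | rfl <;> first | rfl | (exfalso; apply huv; norm_num)
    refine (tsum_congr fun p => ?_).trans tsum_zero
    rcases p with ⟨m, n⟩
    by_cases h : (u * m + v * n : ℝ) = 0
    · have hmn : (m : ℝ) + n = 0 := by
        subst huv'
        have : u * ((m : ℝ) + n) = 0 := by linarith
        exact (mul_eq_zero.mp this).resolve_left hu0
      have hm : m = 0 := by
        have h1 : (0:ℝ) ≤ (m:ℝ) := Nat.cast_nonneg m
        have h2 : (0:ℝ) ≤ (n:ℝ) := Nat.cast_nonneg n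
        have : (m : ℝ) = 0 := by linarith
        exact_mod_cast this
      subst hm
      simp [Complex.zero_cpow ha0]
    · rw [if_neg h, zero_mul]

end IntHZaux

set_option maxHeartbeats 2000000 in
theorem integral_hurwitzZeta_hurwitzZeta_reflected (a b : ℂ) (ha : 1 < a.re) (hb : 1 < b.re) :
    (∫ q in (0:ℝ)..1, hurwitzZeta (↑q) (1 - a) * hurwitzZeta (↑(1 - q)) (1 - b))
      = 2 * Complex.Gamma a * Complex.Gamma b / (2 * Real.pi : ℂ) ^ (a + b)
          * riemannZeta (a + b) * Complex.cos ((Real.pi : ℂ) / 2 * (a + b)) := by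
  open IntHZaux in
  have hπ : (2 * (Real.pi : ℂ)) ≠ 0 := by
    simp [Real.pi_ne_zero]
  have ha1 : a ≠ 1 := fun h => by rw [h] at ha; norm_num at ha
  have hb1 : b ≠ 1 := fun h => by rw [h] at hb; norm_num at hb
  have haN : ∀ n : ℕ, a ≠ -(n : ℂ) := by
    intro n h
    have h1 : a.re = -(n : ℝ) := by rw [h]; simp
    have h2 : (0:ℝ) ≤ (n : ℝ) := n.cast_nonneg
    linarith
  have hbN : ∀ n : ℕ, b ≠ -(n : ℂ) := by
    intro n h
    have h1 : b.re = -(n : ℝ) := by rw [h]; simp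
    have h2 : (0:ℝ) ≤ (n : ℝ) := n.cast_nonneg
    linarith
  have e₂ : ∀ q : ℝ, -((q : ℝ) : UnitAddCircle) = (((-1:ℝ) * q : ℝ) : UnitAddCircle) := by
    intro q
    rw [neg_one_mul]
    exact (AddCircle.coe_neg 1 (x := q)).symm
  have e₁ : ∀ q : ℝ, ((q : ℝ) : UnitAddCircle) = (((1:ℝ) * q : ℝ) : UnitAddCircle) := by
    intro q; rw [one_mul]
  have e₄ : ∀ q : ℝ, -(((1 - q : ℝ)) : UnitAddCircle) = (((1:ℝ) * q : ℝ) : UnitAddCircle) := by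
    intro q
    rw [← AddCircle.coe_neg 1]
    have h : (-(1 - q) : ℝ) = (1 : ℝ) * q + (-1 : ℝ) := by ring
    rw [h, AddCircle.coe_add]
    have h2 : (((-1 : ℝ)) : UnitAddCircle) = 0 := by
      rw [show ((-1 : ℝ)) = -(1:ℝ) from by norm_num, AddCircle.coe_neg 1,
        AddCircle.coe_period, neg_zero]
    rw [h2, add_zero]
  have e₃ : ∀ q : ℝ, (((1 - q : ℝ)) : UnitAddCircle) = (((-1:ℝ) * q : ℝ) : UnitAddCircle) := by
    intro q
    have h : (1 - q : ℝ) = (-1 : ℝ) * q + 1 := by ring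
    rw [h, AddCircle.coe_add, AddCircle.coe_period, add_zero]
  have hfun : ∀ q : ℝ, hurwitzZeta (↑q) (1 - a) * hurwitzZeta (↑(1 - q)) (1 - b)
      = (2 * (Real.pi : ℂ)) ^ (-a) * Complex.Gamma a
          * ((2 * (Real.pi : ℂ)) ^ (-b) * Complex.Gamma b) *
        (cexp (-(Real.pi:ℂ) * I * a / 2) * cexp (-(Real.pi:ℂ) * I * b / 2)
            * (expZeta (((1:ℝ) * q : ℝ) : UnitAddCircle) a
                * expZeta (((-1:ℝ) * q : ℝ) : UnitAddCircle) b)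
          + cexp (-(Real.pi:ℂ) * I * a / 2) * cexp ((Real.pi:ℂ) * I * b / 2)
            * (expZeta (((1:ℝ) * q : ℝ) : UnitAddCircle) a
                * expZeta (((1:ℝ) * q : ℝ) : UnitAddCircle) b)
          + cexp ((Real.pi:ℂ) * I * a / 2) * cexp (-(Real.pi:ℂ) * I * b / 2)
            * (expZeta (((-1:ℝ) * q : ℝ) : UnitAddCircle) a
                * expZeta (((-1:ℝ) * q : ℝ) : UnitAddCircle) b)
          + cexp ((Real.pi:ℂ) * I * a / 2) * cexp ((Real.pi:ℂ) * I * b / 2)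
            * (expZeta (((-1:ℝ) * q : ℝ) : UnitAddCircle) a
                * expZeta (((1:ℝ) * q : ℝ) : UnitAddCircle) b)) := by
    intro q
    rw [hurwitzZeta_one_sub _ haN (Or.inr ha1), hurwitzZeta_one_sub _ hbN (Or.inr hb1),
      e₂ q, e₄ q, e₃ q, e₁ q]
    ring
  rw [intervalIntegral.integral_congr (fun q _ => hfun q)]
  have hInt : ∀ (u v : ℝ), IntervalIntegrable
      (fun q : ℝ => expZeta ((u * q : ℝ) : UnitAddCircle) a
        * expZeta ((v * q : ℝ) : UnitAddCircle) b) MeasureTheory.volume 0 1 := fun u v =>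
    ((continuous_expZeta_line a ha u).mul (continuous_expZeta_line b hb v)).intervalIntegrable 0 1
  have J : ∀ (c : ℂ) (u v : ℝ), IntervalIntegrable
      (fun q : ℝ => c * (expZeta ((u * q : ℝ) : UnitAddCircle) a
        * expZeta ((v * q : ℝ) : UnitAddCircle) b)) MeasureTheory.volume 0 1 :=
    fun c u v => (hInt u v).const_mul c
  rw [intervalIntegral.integral_const_mul,
    intervalIntegral.integral_add (((J _ 1 (-1)).add (J _ 1 1)).add (J _ (-1) (-1))) (J _ (-1) 1),
    intervalIntegral.integral_add ((J _ 1 (-1)).add (J _ 1 1)) (J _ (-1) (-1)),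
    intervalIntegral.integral_add (J _ 1 (-1)) (J _ 1 1),
    intervalIntegral.integral_const_mul, intervalIntegral.integral_const_mul,
    intervalIntegral.integral_const_mul, intervalIntegral.integral_const_mul,
    key a b ha hb 1 (-1) (Or.inl rfl) (Or.inr rfl),
    key a b ha hb 1 1 (Or.inl rfl) (Or.inl rfl),
    key a b ha hb (-1) (-1) (Or.inr rfl) (Or.inr rfl),
    key a b ha hb (-1) 1 (Or.inr rfl) (Or.inl rfl),
    if_pos (by norm_num : (1:ℝ) + -1 = 0), if_neg (by norm_num : ¬((1:ℝ) + 1 = 0)),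
    if_neg (by norm_num : ¬((-1:ℝ) + -1 = 0)), if_pos (by norm_num : (-1:ℝ) + 1 = 0)]
  have hea : cexp (-(Real.pi:ℂ) * I * a / 2) * cexp (-(Real.pi:ℂ) * I * b / 2)
      = cexp (-((Real.pi : ℂ) / 2 * (a + b)) * I) := by
    rw [← Complex.exp_add]; congr 1; ring
  have heb : cexp ((Real.pi:ℂ) * I * a / 2) * cexp ((Real.pi:ℂ) * I * b / 2)
      = cexp ((Real.pi : ℂ) / 2 * (a + b) * I) := by
    rw [← Complex.exp_add]; congr 1; ring
  rw [hea, heb, Complex.cos, Complex.cpow_add _ _ hπ, Complex.cpow_neg, Complex.cpow_neg]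
  have h2a : ((2 * (Real.pi:ℂ)) ^ a) ≠ 0 := by
    intro h
    exact hπ ((Complex.cpow_eq_zero_iff _ _).mp h).1
  have h2b : ((2 * (Real.pi:ℂ)) ^ b) ≠ 0 := by
    intro h
    exact hπ ((Complex.cpow_eq_zero_iff _ _).mp h).1
  field_simp
  ring
end

section
/- \int_0^1 B_2(q) \ln(\sin(\pi q)) dq = -\zeta(3)/(2\pi^2), where B_2(q) = q^2 - q + 1/6. -/
/-!
The Fourier series `π² B₂(q) = ∑ₙ cos (2πnq) / n²` may be integrated term by term against
`log (sin (πq))`, dominated by `|log (sin (πq))| / n²`, so it suffices to show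
`∫₀¹ cos (2πnq) log (sin (πq)) dq = -1 / (2n)` for `n ≥ 1`. For this differentiate
`sin (2πnq) log (sin (πq))`, which vanishes at both ends: since
`sin (2nθ) = sin θ ∑_{k<n} 2 cos ((2k+1)θ)`, the logarithmic derivative of `sin` turns into a
trigonometric polynomial whose integral over `[0, 1]` is `1`.
-/

open Real MeasureTheory Set

lemma sin_two_mul_nat_mul_eq (n : ℕ) (θ : ℝ) :
    sin (2 * n * θ) = sin θ * ∑ k ∈ Finset.range n, 2 * cos ((2 * k + 1) * θ) := by
  induction n with
  | zero => simp
  | succ n ih =>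
    have step :
        sin (2 * (n + 1) * θ) - sin (2 * n * θ) = sin θ * (2 * cos ((2 * n + 1) * θ)) := by
      rw [sin_sub_sin]; ring_nf
    rw [Finset.sum_range_succ, mul_add, ← ih]
    push_cast
    linarith

lemma cos_mul_two_mul_cos_odd (k : ℕ) (θ : ℝ) :
    cos θ * (2 * cos ((2 * k + 1) * θ)) = cos (2 * k * θ) + cos (2 * (k + 1) * θ) := by
  rw [show 2 * k * θ = (2 * k + 1) * θ - θ by ring,
    show 2 * (k + 1) * θ = (2 * k + 1) * θ + θ by ring, cos_sub, cos_add]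
  ring

lemma integral_cos_two_pi_nat_mul (m : ℕ) :
    ∫ x in (0 : ℝ)..1, cos (2 * π * m * x) = if m = 0 then 1 else 0 := by
  rcases eq_or_ne m 0 with rfl | hm
  · simp
  · have hc : 2 * π * m ≠ 0 := by positivity
    rw [if_neg hm, intervalIntegral.integral_comp_mul_left (fun y => cos y) hc, integral_cos]
    have := sin_nat_mul_pi (2 * m)
    push_cast at this
    simp [show 2 * π * m = 2 * m * π by ring, this]

lemma integral_cos_pi_mul_mul_sum_cos_odd {n : ℕ} (hn : n ≠ 0) :
    ∫ x in (0 : ℝ)..1, cos (π * x) * ∑ k ∈ Finset.range n, 2 * cos ((2 * k + 1) * (π * x))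
      = 1 := by
  have hcos (c : ℝ) : IntervalIntegrable (fun x => cos (c * x)) volume 0 1 :=
    (by fun_prop : Continuous fun x => cos (c * x)).intervalIntegrable 0 1
  have hterm (k : ℕ) (x : ℝ) : cos (π * x) * (2 * cos ((2 * k + 1) * (π * x)))
      = cos (2 * π * k * x) + cos (2 * π * (k + 1 : ℕ) * x) := by
    rw [cos_mul_two_mul_cos_odd]; push_cast; ring_nf
  simp_rw [Finset.mul_sum, hterm]
  rw [intervalIntegral.integral_finsetSum fun k _ => (hcos _).add (hcos _)]
  simp_rw [intervalIntegral.integral_add (hcos _) (hcos _), integral_cos_two_pi_nat_mul]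
  simp [Finset.sum_ite_eq', Nat.pos_of_ne_zero hn]

lemma intervalIntegrable_log_sin_pi_mul :
    IntervalIntegrable (fun x => log (sin (π * x))) volume 0 1 := by
  simpa using (intervalIntegrable_log_sin (a := 0) (b := π)).comp_mul_left (c := π)

lemma continuous_sin_mul_log_sin (n : ℕ) :
    Continuous fun x => sin (2 * n * x) * log (sin x) := by
  have h : (fun x => sin (2 * n * x) * log (sin x))
      = fun x => -(negMulLog (sin x) * ∑ k ∈ Finset.range n, 2 * cos ((2 * k + 1) * x)) := by
    ext x; rw [sin_two_mul_nat_mul_eq, negMulLog]; ring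
  rw [h]; fun_prop

lemma hasDerivAt_sin_mul_log_sin (n : ℕ) {x : ℝ} (hx : sin x ≠ 0) :
    HasDerivAt (fun x => sin (2 * n * x) * log (sin x))
      (2 * n * cos (2 * n * x) * log (sin x)
        + cos x * ∑ k ∈ Finset.range n, 2 * cos ((2 * k + 1) * x)) x := by
  have hsin : HasDerivAt (fun x => sin (2 * n * x)) (cos (2 * n * x) * (2 * n)) x := by
    simpa using ((hasDerivAt_id x).const_mul (2 * n : ℝ)).sin
  refine (hsin.mul ((hasDerivAt_sin x).log hx)).congr_deriv ?_
  rw [sin_two_mul_nat_mul_eq]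
  field_simp

lemma integral_cos_mul_log_sin {n : ℕ} (hn : n ≠ 0) :
    ∫ x in (0 : ℝ)..1, cos (2 * π * n * x) * log (sin (π * x)) = -1 / (2 * n) := by
  set D : ℝ → ℝ :=
    fun x => cos (π * x) * ∑ k ∈ Finset.range n, 2 * cos ((2 * k + 1) * (π * x))
  have hD : IntervalIntegrable D volume 0 1 := (by fun_prop : Continuous D).intervalIntegrable 0 1
  have hmain : IntervalIntegrable (fun x => cos (2 * π * n * x) * log (sin (π * x))) volume 0 1 :=
    intervalIntegrable_log_sin_pi_mul.continuousOn_mul (by fun_prop)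
  have hftc :
      ∫ x in (0 : ℝ)..1, (2 * π * n * (cos (2 * π * n * x) * log (sin (π * x))) + π * D x)
        = 0 := by
    rw [intervalIntegral.integral_eq_sub_of_hasDeriv_right_of_le zero_le_one
      ((continuous_sin_mul_log_sin n).comp (continuous_const_mul π)).continuousOn
      (fun x hx => ?_) ((hmain.const_mul _).add (hD.const_mul π))]
    · simp [sin_pi]
    · have hs : sin (π * x) ≠ 0 := (sin_pos_of_pos_of_lt_pi (by nlinarith [pi_pos, hx.1])
        (by nlinarith [pi_pos, hx.2])).ne'
      refine (((hasDerivAt_sin_mul_log_sin n hs).comp x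
        ((hasDerivAt_id x).const_mul π)).hasDerivWithinAt).congr_deriv ?_
      simp only [D, mul_one]
      ring_nf
  rw [intervalIntegral.integral_add (hmain.const_mul _) (hD.const_mul π),
    intervalIntegral.integral_const_mul, intervalIntegral.integral_const_mul,
    integral_cos_pi_mul_mul_sum_cos_odd hn] at hftc
  have : (n : ℝ) ≠ 0 := by exact_mod_cast hn
  rw [eq_div_iff (by positivity)]
  apply mul_left_cancel₀ pi_ne_zero
  linear_combination hftc

lemma hasSum_one_div_sq_mul_cos {x : ℝ} (hx : x ∈ Icc (0 : ℝ) 1) :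
    HasSum (fun n : ℕ => 1 / (n : ℝ) ^ 2 * cos (2 * π * n * x))
      (π ^ 2 * (x ^ 2 - x + 1 / 6)) := by
  have h := hasSum_one_div_nat_pow_mul_cos one_ne_zero hx
  rw [← bernoulliFun.eq_def, mul_one, bernoulliFun_two] at h
  convert h using 1
  rw [Nat.factorial_two]
  push_cast
  ring

lemma hasSum_one_div_sq_mul_integral_cos_mul {g : ℝ → ℝ}
    (hg : IntervalIntegrable g volume 0 1) :
    HasSum (fun n : ℕ => 1 / (n : ℝ) ^ 2 * ∫ x in (0 : ℝ)..1, cos (2 * π * n * x) * g x)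
      (π ^ 2 * ∫ x in (0 : ℝ)..1, (x ^ 2 - x + 1 / 6) * g x) := by
  simp_rw [← intervalIntegral.integral_const_mul]
  refine intervalIntegral.hasSum_integral_of_dominated_convergence
    (fun n x => 1 / (n : ℝ) ^ 2 * ‖g x‖) (fun n => ?_) (fun n => ?_) ?_ ?_ ?_
  · have hcos : Continuous fun x => 1 / (n : ℝ) ^ 2 * cos (2 * π * n * x) := by fun_prop
    exact hcos.aestronglyMeasurable.mul hg.def'.aestronglyMeasurable
      |>.congr (.of_forall fun x => mul_assoc _ _ _)
  · refine .of_forall fun x _ => ?_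
    rw [norm_mul, norm_mul, norm_div, norm_one, norm_pow, Real.norm_natCast]
    gcongr
    exact mul_le_of_le_one_left (norm_nonneg _) (abs_cos_le_one _)
  · exact .of_forall fun x _ => (summable_one_div_nat_pow.mpr one_lt_two).mul_right _
  · simp_rw [tsum_mul_right]
    exact hg.norm.const_mul _
  · refine .of_forall fun x hx => ?_
    have hx' : x ∈ Icc (0 : ℝ) 1 := Ioc_subset_Icc_self (by simpa using hx)
    simpa [mul_assoc] using (hasSum_one_div_sq_mul_cos hx').mul_right (g x)

theorem integral_B2_log_sin :
    (∫ q in (0:ℝ)..1, (q ^ 2 - q + 1 / 6) * Real.log (Real.sin (Real.pi * q)))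
      = -(∑' n : ℕ+, 1 / ((n : ℕ) : ℝ) ^ 3) / (2 * Real.pi ^ 2) := by
  have hterm (n : ℕ) :
      1 / (n : ℝ) ^ 2 * ∫ x in (0 : ℝ)..1, cos (2 * π * n * x) * log (sin (π * x))
        = -(1 / 2) * (1 / (n : ℝ) ^ 3) := by
    rcases eq_or_ne n 0 with rfl | hn
    · simp
    · rw [integral_cos_mul_log_sin hn]
      field_simp
  have hsum := hasSum_one_div_sq_mul_integral_cos_mul intervalIntegrable_log_sin_pi_mul
  simp_rw [hterm] at hsum
  have hζ := (summable_one_div_nat_pow.mpr (by norm_num : 1 < 3)).hasSum.mul_left (-(1 / 2))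
  rw [tsum_pnat_eq_tsum_of_eq_zero (f := fun n : ℕ => 1 / (n : ℝ) ^ 3) (by simp),
    eq_div_iff (by positivity)]
  linear_combination 2 * hsum.unique hζ
end
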